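/- arXiv:0804.4693 — 9 statements merged into one kernel-verified Lean document; each statement's English description precedes it below -/
import Mathlib

section
/- Let H be a complex Hilbert space and let P : ℝ → B(H) be a family of bounded skew-adjoint operators (i.e. the adjoint of P(t) equals −P(t) for every t) such that t ↦ P(t) is differentiable in operator norm. Then there exists a family of unitary propagators U(t,s) ∈ B(H): each U(t,s) is unitary, U(s,s) = I, and for each fixed s the map t ↦ U(t,s) is differentiable in operator norm with derivative (d/dt)U(t,s) = P(t)U(t,s). Moreover, if H : ℝ → B(H) is differentiable in operator norm and satisfies the Lax equation (d/dt)H(t) = P(t)H(t) − H(t)P(t) for all t, then H(t) = U(t,s)H(s)U(t,s)⁻¹ for all s,t ∈ ℝ. -/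
/-!
The propagator is the solution of the linear equation `U' = P U`, `U s = 1`, which exists
globally as the sum of its Peano–Baker (Dyson) series: on `|t - s| ≤ r` its `n`-th term is bounded
by `(M r)ⁿ / n!`. Skewness of `P` makes `(U*U)' = 0`, so `U*U = 1`. For the Lax equation, both
`H(t)` and `U(t) H(s) U(t)*` solve the linear commutator equation `W' = P W - W P` with the same
value at `s`, and linear equations with continuous coefficients have unique solutions
(Grönwall). Applied to `H ≡ 1` this also gives `U U* = 1`.
-/

open ContinuousLinearMap intervalIntegral MeasureTheory Set Metric
open scoped Nat Interval

theorem Continuous.exists_forall_abs_sub_le_norm_le {G : Type*} [SeminormedAddCommGroup G]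
    {g : ℝ → G} (hg : Continuous g) (s r : ℝ) : ∃ M, ∀ τ, |τ - s| ≤ r → ‖g τ‖ ≤ M := by
  obtain ⟨M, hM⟩ := (isCompact_closedBall s r).exists_bound_of_continuousOn hg.continuousOn
  exact ⟨M, fun τ hτ => hM τ (by rwa [mem_closedBall, Real.dist_eq])⟩

section LinearODE

variable {F : Type*} [NormedAddCommGroup F] [NormedSpace ℝ F] {L : ℝ → F →L[ℝ] F}

theorem ODE_solution_unique_of_continuous_clm (hL : Continuous L) {f g : ℝ → F}
    (hf : ∀ t, HasDerivAt f (L t (f t)) t) (hg : ∀ t, HasDerivAt g (L t (g t)) t) {t₀ : ℝ}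
    (h : f t₀ = g t₀) : f = g := by
  funext t
  set r := |t - t₀| + 1
  obtain ⟨M, hM⟩ := hL.exists_forall_abs_sub_le_norm_le t₀ r
  have hlip : ∀ τ ∈ Ioo (t₀ - r) (t₀ + r), LipschitzOnWith M.toNNReal (L τ) univ := by
    intro τ hτ
    refine ((L τ).lipschitz.weaken ?_).lipschitzOnWith
    rw [← NNReal.coe_le_coe, coe_nnnorm]
    exact (hM τ (abs_sub_le_iff.2 ⟨by linarith [hτ.2], by linarith [hτ.1]⟩)).trans
      (Real.le_coe_toNNReal M)
  exact ODE_solution_unique_of_mem_Icc hlip (by constructor <;> linarith [abs_nonneg (t - t₀)])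
    (HasDerivAt.continuousOn fun τ _ => hf τ) (fun τ _ => hf τ) (fun _ _ => mem_univ _)
    (HasDerivAt.continuousOn fun τ _ => hg τ) (fun τ _ => hg τ) (fun _ _ => mem_univ _) h
    ⟨by linarith [neg_abs_le (t - t₀)], by linarith [le_abs_self (t - t₀)]⟩

noncomputable def peanoBakerTerm (L : ℝ → F →L[ℝ] F) (s : ℝ) (x₀ : F) : ℕ → ℝ → F
  | 0 => fun _ => x₀
  | n + 1 => fun t => ∫ τ in s..t, L τ (peanoBakerTerm L s x₀ n τ)

variable {s : ℝ} {x₀ : F}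

theorem peanoBakerTerm_succ_self (n : ℕ) : peanoBakerTerm L s x₀ (n + 1) s = 0 :=
  integral_same

theorem norm_peanoBakerTerm_le_abs_sub_pow {M r : ℝ} (hM : ∀ τ, |τ - s| ≤ r → ‖L τ‖ ≤ M)
    (n : ℕ) {t : ℝ} (ht : |t - s| ≤ r) :
    ‖peanoBakerTerm L s x₀ n t‖ ≤ ‖x₀‖ * M ^ n * |t - s| ^ n / n ! := by
  have hM0 : 0 ≤ M := (norm_nonneg _).trans (hM s (by simpa using (abs_nonneg _).trans ht))
  induction n generalizing t with
  | zero => simp [peanoBakerTerm]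
  | succ n ih =>
    set c := ‖x₀‖ * M ^ (n + 1) / (n !)
    have hbound : ∀ τ ∈ Ι s t, ‖L τ (peanoBakerTerm L s x₀ n τ)‖ ≤ c * |τ - s| ^ n := by
      intro τ hτ
      have hτs : |τ - s| ≤ r := (abs_sub_left_of_mem_uIcc (uIoc_subset_uIcc hτ)).trans ht
      calc ‖L τ (peanoBakerTerm L s x₀ n τ)‖
          ≤ ‖L τ‖ * ‖peanoBakerTerm L s x₀ n τ‖ := le_opNorm _ _
        _ ≤ M * (‖x₀‖ * M ^ n * |τ - s| ^ n / n !) :=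
          mul_le_mul (hM τ hτs) (ih hτs) (norm_nonneg _) hM0
        _ = c * |τ - s| ^ n := by ring
    calc ‖peanoBakerTerm L s x₀ (n + 1) t‖
        ≤ |∫ τ in s..t, c * |τ - s| ^ n| :=
          norm_integral_le_abs_of_norm_le (ae_restrict_of_forall_mem measurableSet_uIoc hbound)
            (by apply Continuous.intervalIntegrable; fun_prop)
      _ = c * (|t - s| ^ (n + 1) / (n + 1)) := by
          rw [abs_integral_eq_abs_integral_uIoc, MeasureTheory.integral_const_mul,
            integral_pow_abs_sub_uIoc, abs_of_nonneg (by positivity)]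
      _ = ‖x₀‖ * M ^ (n + 1) * |t - s| ^ (n + 1) / (n + 1)! := by
          simp only [c, Nat.factorial_succ]; push_cast; field_simp

theorem norm_peanoBakerTerm_le_of_abs_sub_le {M r : ℝ} (hM : ∀ τ, |τ - s| ≤ r → ‖L τ‖ ≤ M)
    (n : ℕ) {t : ℝ} (ht : |t - s| ≤ r) :
    ‖peanoBakerTerm L s x₀ n t‖ ≤ ‖x₀‖ * ((M * r) ^ n / n !) := by
  have hM0 : 0 ≤ M := (norm_nonneg _).trans (hM s (by simpa using (abs_nonneg _).trans ht))
  calc ‖peanoBakerTerm L s x₀ n t‖ ≤ ‖x₀‖ * (M * |t - s|) ^ n / n ! := by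
        rw [mul_pow, ← mul_assoc]; exact norm_peanoBakerTerm_le_abs_sub_pow hM n ht
    _ ≤ ‖x₀‖ * ((M * r) ^ n / n !) := by rw [mul_div_assoc]; gcongr

variable [CompleteSpace F]

theorem continuous_peanoBakerTerm (hL : Continuous L) (n : ℕ) :
    Continuous (peanoBakerTerm L s x₀ n) := by
  induction n with
  | zero => exact continuous_const
  | succ n ih =>
    exact continuous_iff_continuousAt.2 fun t =>
      ((hL.clm_apply ih).integral_hasStrictDerivAt s t).hasDerivAt.continuousAt

theorem hasDerivAt_peanoBakerTerm_succ (hL : Continuous L) (n : ℕ) (t : ℝ) :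
    HasDerivAt (peanoBakerTerm L s x₀ (n + 1)) (L t (peanoBakerTerm L s x₀ n t)) t :=
  ((hL.clm_apply (continuous_peanoBakerTerm hL n)).integral_hasStrictDerivAt s t).hasDerivAt

theorem summable_peanoBakerTerm (hL : Continuous L) (t : ℝ) :
    Summable fun n => peanoBakerTerm L s x₀ n t := by
  obtain ⟨M, hM⟩ := hL.exists_forall_abs_sub_le_norm_le s |t - s|
  exact .of_norm_bounded ((Real.summable_pow_div_factorial _).mul_left _)
    fun n => norm_peanoBakerTerm_le_of_abs_sub_le hM n le_rfl

theorem exists_hasDerivAt_eq_clm_apply (hL : Continuous L) (s : ℝ) (x₀ : F) :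
    ∃ f : ℝ → F, f s = x₀ ∧ ∀ t, HasDerivAt f (L t (f t)) t := by
  refine ⟨fun t => ∑' n, peanoBakerTerm L s x₀ n t, ?_, fun t => ?_⟩
  · simp [(summable_peanoBakerTerm hL s).tsum_eq_zero_add, peanoBakerTerm]
  set r := |t - s| + 1
  obtain ⟨M, hM⟩ := hL.exists_forall_abs_sub_le_norm_le s r
  have hball : ∀ y ∈ ball s r, |y - s| ≤ r := fun y hy =>
    (by rwa [mem_ball, Real.dist_eq] at hy : |y - s| < r).le
  have htail : HasDerivAt (fun z => ∑' n, peanoBakerTerm L s x₀ (n + 1) z)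
      (∑' n, L t (peanoBakerTerm L s x₀ n t)) t := by
    refine hasDerivAt_tsum_of_isPreconnected (u := fun n => M * (‖x₀‖ * ((M * r) ^ n / n !)))
      ((Real.summable_pow_div_factorial _).mul_left _ |>.mul_left _) isOpen_ball
      (convex_ball s r).isPreconnected (fun n y _ => hasDerivAt_peanoBakerTerm_succ hL n y)
      (fun n y hy => ?_) (mem_ball_self (by positivity)) (by simp [peanoBakerTerm_succ_self])
      (by rw [mem_ball, Real.dist_eq]; linarith)
    exact (le_opNorm _ _).trans (mul_le_mul (hM y (hball y hy))
      (norm_peanoBakerTerm_le_of_abs_sub_le hM n (hball y hy)) (norm_nonneg _)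
      ((norm_nonneg _).trans (hM y (hball y hy))))
  convert htail.const_add x₀ using 1
  · funext z; exact (summable_peanoBakerTerm hL z).tsum_eq_zero_add
  · exact (L t).map_tsum (summable_peanoBakerTerm hL t)

end LinearODE

section Propagator

variable {A : Type*} [NormedRing A] [NormedAlgebra ℝ A] {P : ℝ → A}

theorem exists_hasDerivAt_eq_mul [CompleteSpace A] (hP : Continuous P) (s : ℝ) (x₀ : A) :
    ∃ U : ℝ → A, U s = x₀ ∧ ∀ t, HasDerivAt U (P t * U t) t :=
  exists_hasDerivAt_eq_clm_apply (L := fun t => mul ℝ A (P t)) ((mul ℝ A).continuous.comp hP) s x₀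

theorem eq_of_hasDerivAt_commutator (hP : Continuous P) {f g : ℝ → A}
    (hf : ∀ t, HasDerivAt f (P t * f t - f t * P t) t)
    (hg : ∀ t, HasDerivAt g (P t * g t - g t * P t) t) {t₀ : ℝ} (h : f t₀ = g t₀) : f = g :=
  ODE_solution_unique_of_continuous_clm (L := fun t => mul ℝ A (P t) - (mul ℝ A).flip (P t))
    (by fun_prop) hf hg h

variable [StarRing A] [ContinuousStar A] [StarModule ℝ A] {U : ℝ → A} {s : ℝ}

theorem hasDerivAt_star_of_star_eq_neg (hskew : ∀ t, star (P t) = -P t) {t : ℝ}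
    (hU : HasDerivAt U (P t * U t) t) :
    HasDerivAt (fun τ => star (U τ)) (-(star (U t) * P t)) t := by
  simpa [star_mul, hskew] using hU.star

theorem star_mul_self_eq_one_of_hasDerivAt (hskew : ∀ t, star (P t) = -P t)
    (hU : ∀ t, HasDerivAt U (P t * U t) t) (hUs : U s = 1) (t : ℝ) : star (U t) * U t = 1 := by
  have hzero : ∀ τ, HasDerivAt (fun τ => star (U τ) * U τ) 0 τ := fun τ =>
    ((hasDerivAt_star_of_star_eq_neg hskew (hU τ)).mul (hU τ)).congr_deriv (by noncomm_ring)
  calc star (U t) * U t = star (U s) * U s :=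
        is_const_of_deriv_eq_zero (fun τ => (hzero τ).differentiableAt)
          (fun τ => (hzero τ).deriv) t s
    _ = 1 := by simp [hUs]

theorem eq_mul_mul_star_of_hasDerivAt_commutator (hP : Continuous P)
    (hskew : ∀ t, star (P t) = -P t) (hU : ∀ t, HasDerivAt U (P t * U t) t) (hUs : U s = 1)
    {H : ℝ → A} (hH : ∀ t, HasDerivAt H (P t * H t - H t * P t) t) (t : ℝ) :
    H t = U t * H s * star (U t) := by
  have hconj : ∀ τ, HasDerivAt (fun τ => U τ * H s * star (U τ))
      (P τ * (U τ * H s * star (U τ)) - U τ * H s * star (U τ) * P τ) τ := fun τ =>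
    (((hU τ).mul_const (H s)).mul (hasDerivAt_star_of_star_eq_neg hskew (hU τ))).congr_deriv
      (by noncomm_ring)
  exact congrFun (eq_of_hasDerivAt_commutator hP hH hconj (t₀ := s) (by simp [hUs])) t

theorem mem_unitary_of_hasDerivAt (hP : Continuous P) (hskew : ∀ t, star (P t) = -P t)
    (hU : ∀ t, HasDerivAt U (P t * U t) t) (hUs : U s = 1) (t : ℝ) : U t ∈ unitary A := by
  refine Unitary.mem_iff.2 ⟨star_mul_self_eq_one_of_hasDerivAt hskew hU hUs t, ?_⟩
  have hone : ∀ t, HasDerivAt (fun _ => (1 : A)) (P t * 1 - 1 * P t) t := fun t => by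
    simpa using hasDerivAt_const t (1 : A)
  simpa using (eq_mul_mul_star_of_hasDerivAt_commutator hP hskew hU hUs hone t).symm

end Propagator

/-- For a differentiable family of bounded skew-adjoint operators `P t` there exists a family
of unitary propagators `U t s` with `U s s = 1` and `d/dt U t s = P t ∘ U t s`, and any
norm-differentiable family `H t` satisfying the Lax equation
`d/dt H t = P t ∘ H t - H t ∘ P t` satisfies `H t = U t s ∘ H s ∘ (U t s)⁻¹`. -/
theorem stmt_0 {E : Type*} [NormedAddCommGroup E] [InnerProductSpace ℂ E] [CompleteSpace E]
    (P : ℝ → E →L[ℂ] E)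
    (hskew : ∀ t, adjoint (P t) = -P t)
    (hPdiff : Differentiable ℝ P) :
    ∃ U : ℝ → ℝ → E →L[ℂ] E,
      (∀ t s : ℝ, U t s ∈ unitary (E →L[ℂ] E)) ∧
      (∀ s : ℝ, U s s = 1) ∧
      (∀ s t : ℝ, HasDerivAt (fun τ => U τ s) (P t ∘L U t s) t) ∧
      (∀ H : ℝ → E →L[ℂ] E,
        (∀ t, HasDerivAt H (P t ∘L H t - H t ∘L P t) t) →
        ∀ s t : ℝ, H t = U t s ∘L H s ∘L star (U t s)) := by
  have hP : Continuous P := hPdiff.continuous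
  have hstar : ∀ t, star (P t) = -P t := fun t => (star_eq_adjoint (P t)).trans (hskew t)
  choose U hUs hU using fun s => exists_hasDerivAt_eq_mul hP s (1 : E →L[ℂ] E)
  refine ⟨fun t s => U s t, fun t s => mem_unitary_of_hasDerivAt hP hstar (hU s) (hUs s) t,
    hUs, fun s => hU s, fun H hH s t => ?_⟩
  exact (eq_mul_mul_star_of_hasDerivAt_commutator hP hstar (hU s) (hUs s) hH t).trans
    (mul_assoc _ _ _)
end

section
/- Let a, b : ℝ → (ℤ → ℝ) be curves of bounded real sequences that are differentiable as curves in the Banach space of bounded sequences with the supremum norm. For each t let H(t) be the Jacobi operator on ℓ²(ℤ,ℂ) with coefficients a(·,t), b(·,t), and let P(t) be the bounded operator (P(t)f)(n) = a(n,t)f(n+1) − a(n−1,t)f(n−1). Then the Lax equation (d/dt)H(t) = P(t)H(t) − H(t)P(t) (derivative in operator norm) holds for all t ∈ ℝ if and only if a, b satisfy the Toda lattice in Flaschka's variables, i.e. ȧ(n,t) = a(n,t)(b(n+1,t) − b(n,t)) and ḃ(n,t) = 2(a(n,t)² − a(n−1,t)²) for all (n,t) ∈ ℤ × ℝ. -/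
/-!
The Jacobi operator of coefficients `(u, v)` is `M_u S + S⁻¹ M_u + M_v`, where `(S f)(n) = f(n + 1)`
and `M_u` multiplication by `u`, so it depends continuously and `ℝ`-linearly on
`(u, v) ∈ ℓ^∞ × ℓ^∞`. Hence a differentiable pair `(a, b)` makes `H` differentiable in operator
norm, with derivative the Jacobi operator of `(ȧ, ḃ)`. The commutator `[P, H]` is again a Jacobi
operator, of coefficients `a (b(· + 1) - b)` and `2 (a² - a(· - 1)²)`. Reading off the matrix
entries `⟨δₙ, · δₙ₊₁⟩` and `⟨δₙ, · δₙ⟩` of the Lax equation gives the Toda equations;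
conversely the Toda equations say that the two Jacobi operators have equal coefficients.
-/

open scoped BoundedContinuousFunction ENNReal lp
open ContinuousLinearMap

section Reindex

variable {ι ι' E : Type*} [NormedAddCommGroup E]

theorem Memℓp.comp_equiv {p : ℝ≥0∞} {f : ι → E} (hf : Memℓp f p) (e : ι' ≃ ι) :
    Memℓp (f ∘ e) p := by
  rcases p.trichotomy with rfl | rfl | hp
  · exact memℓp_zero_iff.2 ((memℓp_zero_iff.1 hf).preimage e.injective.injOn)
  · rw [memℓp_infty_iff, ← e.surjective.range_comp] at hf
    exact memℓp_infty_iff.2 hf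
  · exact (memℓp_gen_iff hp).2 (e.summable_iff.2 ((memℓp_gen_iff hp).1 hf))

variable (𝕜 : Type*) [NormedRing 𝕜] [Module 𝕜 E] [IsBoundedSMul 𝕜 E]
  (p : ℝ≥0∞) [Fact (1 ≤ p)]

noncomputable def lp.compEquiv (e : ι' ≃ ι) : ℓ^p(ι, E) →ₗᵢ[𝕜] ℓ^p(ι', E) where
  toFun f := ⟨f ∘ e, (lp.memℓp f).comp_equiv e⟩
  map_add' _ _ := rfl
  map_smul' _ _ := rfl
  norm_map' f := by
    rcases p.dichotomy with rfl | hp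
    · simp only [lp.norm_eq_ciSup]
      exact e.iSup_comp (g := fun i => ‖f i‖)
    · rw [lp.norm_eq_tsum_rpow (by linarith), lp.norm_eq_tsum_rpow (by linarith)]
      exact congrArg (· ^ _) (e.tsum_eq fun i => ‖f i‖ ^ p.toReal)

@[simp]
theorem lp.compEquiv_apply (e : ι' ≃ ι) (f : ℓ^p(ι, E)) (i : ι') :
    lp.compEquiv 𝕜 p e f i = f (e i) := rfl

end Reindex

section Multiplier

variable {ι : Type*} [TopologicalSpace ι] (𝕜 : Type*) [RCLike 𝕜]

theorem BoundedContinuousFunction.norm_mul_ofReal_apply_le (c : ι →ᵇ ℝ) (i : ι) :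
    ‖mul 𝕜 𝕜 (c i)‖ ≤ ‖c‖ :=
  (opNorm_mul_apply_le 𝕜 𝕜 _).trans ((RCLike.norm_ofReal (c i)).trans_le (c.norm_coe_le_norm i))

variable (p : ℝ≥0∞) [Fact (1 ≤ p)]

noncomputable def lp.multiplier : (ι →ᵇ ℝ) →L[ℝ] (ℓ^p(ι, 𝕜) →L[𝕜] ℓ^p(ι, 𝕜)) :=
  LinearMap.mkContinuous
    { toFun c := lp.mapCLM p (fun i => mul 𝕜 𝕜 (c i)) (norm_nonneg c) (c.norm_mul_ofReal_apply_le 𝕜)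
      map_add' c d := by ext f i; simp
      map_smul' r c := by ext f i; simp [RCLike.real_smul_eq_coe_mul, mul_assoc] }
    1 fun c => (lp.norm_mapCLM_le p _ (norm_nonneg c) (c.norm_mul_ofReal_apply_le 𝕜)).trans_eq
      (one_mul _).symm

@[simp]
theorem lp.multiplier_apply (c : ι →ᵇ ℝ) (f : ℓ^p(ι, 𝕜)) (i : ι) :
    lp.multiplier 𝕜 p c f i = (c i : 𝕜) * f i := by
  simp [lp.multiplier]

end Multiplier

section Derivatives

theorem HasDerivAt.boundedContinuousFunction_apply {𝕜 α E : Type*} [NontriviallyNormedField 𝕜]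
    [TopologicalSpace α] [NormedAddCommGroup E] [NormedSpace 𝕜 E] {a : 𝕜 → α →ᵇ E}
    {a' : α →ᵇ E} {t : 𝕜} (h : HasDerivAt a a' t) (x : α) :
    HasDerivAt (fun τ => a τ x) (a' x) t :=
  (BoundedContinuousFunction.evalCLM (β := E) 𝕜 x).hasFDerivAt.comp_hasDerivAt t h

variable {𝕜 : Type*} [RCLike 𝕜]

theorem HasDerivAt.of_ofReal_comp {g : ℝ → ℝ} {g' t : ℝ}
    (h : HasDerivAt (fun τ => (g τ : 𝕜)) g' t) : HasDerivAt g g' t := by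
  simpa [Function.comp_def] using (RCLike.reCLM (K := 𝕜)).hasFDerivAt.comp_hasDerivAt t h

theorem HasDerivAt.lp_apply_apply {ι : Type*} {p : ℝ≥0∞} [Fact (1 ≤ p)]
    {T : ℝ → ℓ^p(ι, 𝕜) →L[𝕜] ℓ^p(ι, 𝕜)} {T' : ℓ^p(ι, 𝕜) →L[𝕜] ℓ^p(ι, 𝕜)} {t : ℝ}
    (h : HasDerivAt T T' t) (f : ℓ^p(ι, 𝕜)) (i : ι) :
    HasDerivAt (fun τ => T τ f i) (T' f i) t :=
  (((lp.evalCLM 𝕜 (fun _ : ι => 𝕜) p i).comp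
    (apply 𝕜 _ f)).restrictScalars ℝ).hasFDerivAt.comp_hasDerivAt t h

end Derivatives

section Jacobi

noncomputable def jacobiCLM : (ℤ →ᵇ ℝ) × (ℤ →ᵇ ℝ) →L[ℝ] (ℓ²(ℤ, ℂ) →L[ℂ] ℓ²(ℤ, ℂ)) :=
  let M := lp.multiplier (ι := ℤ) ℂ 2
  let S := (lp.compEquiv ℂ 2 (Equiv.addRight (1 : ℤ))).toContinuousLinearMap
  let S' := (lp.compEquiv ℂ 2 (Equiv.subRight (1 : ℤ))).toContinuousLinearMap
  (((compL ℂ ℓ²(ℤ, ℂ) ℓ²(ℤ, ℂ) ℓ²(ℤ, ℂ)).flip S).restrictScalars ℝ +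
      (compL ℂ ℓ²(ℤ, ℂ) ℓ²(ℤ, ℂ) ℓ²(ℤ, ℂ) S').restrictScalars ℝ) ∘L M ∘L fst ℝ _ _ +
    M ∘L snd ℝ _ _

theorem jacobiCLM_apply (u v : ℤ →ᵇ ℝ) (f : ℓ²(ℤ, ℂ)) (n : ℤ) :
    jacobiCLM (u, v) f n = u n * f (n + 1) + u (n - 1) * f (n - 1) + v n * f n := by
  simp [jacobiCLM]

variable {T : ℓ²(ℤ, ℂ) →L[ℂ] ℓ²(ℤ, ℂ)} {α β γ : ℤ → ℂ}

theorem apply_single_succ_of_tridiagonal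
    (hT : ∀ f n, T f n = α n * f (n + 1) + β n * f (n - 1) + γ n * f n) (n : ℤ) :
    T (lp.single 2 (n + 1) 1) n = α n := by
  rw [hT, lp.single_apply_self, lp.single_apply_ne _ _ _ (by omega),
    lp.single_apply_ne _ _ _ (by omega)]
  ring

theorem apply_single_self_of_tridiagonal
    (hT : ∀ f n, T f n = α n * f (n + 1) + β n * f (n - 1) + γ n * f n) (n : ℤ) :
    T (lp.single 2 n 1) n = γ n := by
  rw [hT, lp.single_apply_self, lp.single_apply_ne _ _ _ (by omega),
    lp.single_apply_ne _ _ _ (by omega)]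
  ring

theorem lax_commutator_apply {u v : ℤ → ℝ} {H P : ℓ²(ℤ, ℂ) →L[ℂ] ℓ²(ℤ, ℂ)}
    (hH : ∀ f n, H f n = u n * f (n + 1) + u (n - 1) * f (n - 1) + v n * f n)
    (hP : ∀ f n, P f n = u n * f (n + 1) - u (n - 1) * f (n - 1)) (f : ℓ²(ℤ, ℂ)) (n : ℤ) :
    (P ∘L H - H ∘L P) f n =
      ((u n * (v (n + 1) - v n) : ℝ) : ℂ) * f (n + 1) +
      ((u (n - 1) * (v n - v (n - 1)) : ℝ) : ℂ) * f (n - 1) +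
      ((2 * (u n ^ 2 - u (n - 1) ^ 2) : ℝ) : ℂ) * f n := by
  simp only [sub_apply, comp_apply, lp.coeFn_sub, Pi.sub_apply, hP, hH, sub_add_cancel,
    add_sub_cancel_right]
  push_cast
  ring

end Jacobi

/-- For curves of bounded sequences `a, b` which are differentiable in the sup norm, the Lax
equation `d/dt H(t) = P(t)H(t) − H(t)P(t)` (derivative in operator norm) for the associated
Jacobi operators `H(t)` and the operators `P(t)` holds for all `t` if and only if `a, b`
satisfy the Toda lattice equations in Flaschka's variables. -/
theorem stmt_3 (a b : ℝ → (ℤ →ᵇ ℝ))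
    (hadiff : Differentiable ℝ a) (hbdiff : Differentiable ℝ b)
    (H P : ℝ → (lp (fun _ : ℤ => ℂ) 2 →L[ℂ] lp (fun _ : ℤ => ℂ) 2))
    (hH : ∀ (t : ℝ) (f : lp (fun _ : ℤ => ℂ) 2) (n : ℤ),
      H t f n = (a t n : ℂ) * f (n + 1) + (a t (n - 1) : ℂ) * f (n - 1) + (b t n : ℂ) * f n)
    (hP : ∀ (t : ℝ) (f : lp (fun _ : ℤ => ℂ) 2) (n : ℤ),
      P t f n = (a t n : ℂ) * f (n + 1) - (a t (n - 1) : ℂ) * f (n - 1)) :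
    (∀ t : ℝ, HasDerivAt H (P t ∘L H t - H t ∘L P t) t) ↔
      (∀ (n : ℤ) (t : ℝ),
        HasDerivAt (fun τ => a τ n) (a t n * (b t (n + 1) - b t n)) t ∧
        HasDerivAt (fun τ => b τ n) (2 * ((a t n) ^ 2 - (a t (n - 1)) ^ 2)) t) := by
  have hcomm (t : ℝ) := lax_commutator_apply (hH t) (hP t)
  constructor
  · intro hderiv n t
    have hentry (f : ℓ²(ℤ, ℂ)) := (hderiv t).lp_apply_apply f n
    constructor
    · have h := hentry (lp.single 2 (n + 1) 1)
      simp only [apply_single_succ_of_tridiagonal (hcomm t),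
        apply_single_succ_of_tridiagonal (hH _)] at h
      exact h.of_ofReal_comp
    · have h := hentry (lp.single 2 n 1)
      simp only [apply_single_self_of_tridiagonal (hcomm t),
        apply_single_self_of_tridiagonal (hH _)] at h
      exact h.of_ofReal_comp
  · intro htoda t
    have ha' (n : ℤ) : deriv a t n = a t n * (b t (n + 1) - b t n) :=
      ((hadiff t).hasDerivAt.boundedContinuousFunction_apply n).unique (htoda n t).1
    have hb' (n : ℤ) : deriv b t n = 2 * ((a t n) ^ 2 - (a t (n - 1)) ^ 2) :=
      ((hbdiff t).hasDerivAt.boundedContinuousFunction_apply n).unique (htoda n t).2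
    have hHJ : H = fun τ => jacobiCLM (a τ, b τ) := by
      ext τ f n
      rw [hH, jacobiCLM_apply]
    have hcomm_jacobi : P t ∘L H t - H t ∘L P t = jacobiCLM (deriv a t, deriv b t) := by
      ext f n
      rw [hcomm, jacobiCLM_apply, ha', ha', hb', sub_add_cancel]
    rw [hcomm_jacobi, hHJ]
    exact jacobiCLM.hasFDerivAt.comp_hasDerivAt t
      ((hadiff t).hasDerivAt.prodMk (hbdiff t).hasDerivAt)
end

section
/- Let κ > 0, γ > 0, σ ∈ {+1, −1} and q₊ ∈ ℝ, and define q₁(n,t) = q₊ + log[(1 + (γ/(1−e^{−2κ})) exp(−2κn + 2σ sinh(κ)t)) / (1 + (γ/(1−e^{−2κ})) exp(−2κ(n+1) + 2σ sinh(κ)t))] for (n,t) ∈ ℤ × ℝ. Then q₁ solves the Toda equations of motion: for all n ∈ ℤ and t ∈ ℝ, ∂²q₁/∂t²(n,t) = exp(−(q₁(n,t) − q₁(n−1,t))) − exp(−(q₁(n+1,t) − q₁(n,t))). -/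
/-!
Write `q n = q₊ + ℓ n - ℓ (n + 1)` with `ℓ n = log τ n`. Then `q n - q (n - 1)` is minus the second
difference of `ℓ`, so Toda's equations follow from the τ-form
`ℓ n'' = exp (ℓ (n - 1) - 2 ℓ n + ℓ (n + 1)) - 1`. For the one-soliton `τ n = 1 + w n` with
`w n = c exp (-2κn + 2σ sinh κ t)`, both sides equal `4 sinh² κ · w n / (1 + w n)²`: the left one since
`w n' = 2σ sinh κ · w n`, the right one since `w (n ± 1) = e^{∓2κ} w n` and `e^{2κ} + e^{-2κ} - 2 = 4 sinh² κ`.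
-/

open Real

theorem toda_of_logTau (ℓ : ℤ → ℝ → ℝ) (C : ℝ) (hdiff : ∀ n, Differentiable ℝ (ℓ n))
    (hτ : ∀ n t, HasDerivAt (deriv (ℓ n)) (exp (ℓ (n - 1) t + ℓ (n + 1) t - 2 * ℓ n t) - 1) t)
    (q : ℤ → ℝ → ℝ) (hq : ∀ n t, q n t = C + (ℓ n t - ℓ (n + 1) t)) :
    (∀ n : ℤ, Differentiable ℝ (q n)) ∧
    ∀ (n : ℤ) (t : ℝ), HasDerivAt (deriv (q n))
      (exp (-(q n t - q (n - 1) t)) - exp (-(q (n + 1) t - q n t))) t := by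
  have hq_fun (n : ℤ) : q n = fun t => C + (ℓ n t - ℓ (n + 1) t) := funext (hq n)
  have hexp (n : ℤ) (t : ℝ) :
      exp (-(q n t - q (n - 1) t)) = exp (ℓ (n - 1) t + ℓ (n + 1) t - 2 * ℓ n t) := by
    rw [hq, hq, sub_add_cancel]
    ring_nf
  refine ⟨fun n => ?_, fun n t => ?_⟩
  · rw [hq_fun]
    exact ((hdiff n).sub (hdiff (n + 1))).const_add C
  · have hderiv : deriv (q n) = fun t => deriv (ℓ n) t - deriv (ℓ (n + 1)) t := by
      ext t
      rw [hq_fun]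
      exact (((hdiff n t).hasDerivAt.sub (hdiff (n + 1) t).hasDerivAt).const_add C).deriv
    rw [hderiv]
    refine ((hτ n t).sub (hτ (n + 1) t)).congr_deriv ?_
    rw [← hexp, ← hexp, add_sub_cancel_right]
    ring

noncomputable def solitonWeight (c κ σ : ℝ) (n : ℤ) (t : ℝ) : ℝ :=
  c * exp (-2 * κ * n + 2 * σ * sinh κ * t)

section solitonWeight

variable {c : ℝ} (κ σ : ℝ)

theorem solitonWeight_nonneg (hc : 0 ≤ c) (n : ℤ) (t : ℝ) : 0 ≤ solitonWeight c κ σ n t :=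
  mul_nonneg hc (exp_pos _).le

theorem one_add_solitonWeight_pos (hc : 0 ≤ c) (n : ℤ) (t : ℝ) :
    0 < 1 + solitonWeight c κ σ n t := by
  linarith [solitonWeight_nonneg κ σ hc n t]

theorem solitonWeight_sub_one (n : ℤ) (t : ℝ) :
    solitonWeight c κ σ (n - 1) t = exp (2 * κ) * solitonWeight c κ σ n t := by
  simp only [solitonWeight, Int.cast_sub, Int.cast_one]
  rw [mul_left_comm, ← exp_add]
  ring_nf

theorem solitonWeight_add_one (n : ℤ) (t : ℝ) :
    solitonWeight c κ σ (n + 1) t = exp (-(2 * κ)) * solitonWeight c κ σ n t := by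
  simp only [solitonWeight, Int.cast_add, Int.cast_one]
  rw [mul_left_comm, ← exp_add]
  ring_nf

theorem hasDerivAt_solitonWeight (n : ℤ) (t : ℝ) :
    HasDerivAt (solitonWeight c κ σ n) (2 * σ * sinh κ * solitonWeight c κ σ n t) t := by
  have hlin : HasDerivAt (fun s => -2 * κ * n + 2 * σ * sinh κ * s) (2 * σ * sinh κ) t := by
    simpa using ((hasDerivAt_id t).const_mul (2 * σ * sinh κ)).const_add (-2 * κ * (n : ℝ))
  refine (hlin.exp.const_mul c).congr_deriv ?_
  rw [solitonWeight]
  ring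

theorem hasDerivAt_log_one_add_solitonWeight (hc : 0 ≤ c) (n : ℤ) (t : ℝ) :
    HasDerivAt (fun t => log (1 + solitonWeight c κ σ n t))
      (2 * σ * sinh κ * solitonWeight c κ σ n t / (1 + solitonWeight c κ σ n t)) t :=
  ((hasDerivAt_solitonWeight κ σ n t).const_add 1).log (one_add_solitonWeight_pos κ σ hc n t).ne'

theorem hasDerivAt_deriv_log_one_add_solitonWeight (hc : 0 ≤ c) (n : ℤ) (t : ℝ) :
    HasDerivAt (deriv fun t => log (1 + solitonWeight c κ σ n t))
      ((2 * σ * sinh κ) ^ 2 * solitonWeight c κ σ n t / (1 + solitonWeight c κ σ n t) ^ 2) t := by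
  have hderiv : (deriv fun t => log (1 + solitonWeight c κ σ n t)) = fun t =>
      2 * σ * sinh κ * solitonWeight c κ σ n t / (1 + solitonWeight c κ σ n t) :=
    funext fun t => (hasDerivAt_log_one_add_solitonWeight κ σ hc n t).deriv
  have hw := hasDerivAt_solitonWeight (c := c) κ σ n t
  rw [hderiv]
  refine ((hw.const_mul (2 * σ * sinh κ)).div (hw.const_add 1)
    (one_add_solitonWeight_pos κ σ hc n t).ne').congr_deriv ?_
  field_simp
  ring

theorem exp_secondDiff_log_one_add_solitonWeight (hσ : σ ^ 2 = 1) (hc : 0 ≤ c) (n : ℤ) (t : ℝ) :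
    exp (log (1 + solitonWeight c κ σ (n - 1) t) + log (1 + solitonWeight c κ σ (n + 1) t)
        - 2 * log (1 + solitonWeight c κ σ n t)) =
      1 + (2 * σ * sinh κ) ^ 2 * solitonWeight c κ σ n t / (1 + solitonWeight c κ σ n t) ^ 2 := by
  have hcosh : exp (2 * κ) + exp (-(2 * κ)) = 2 + 4 * sinh κ ^ 2 := by
    have h := cosh_eq (2 * κ)
    rw [cosh_two_mul, cosh_sq] at h
    linarith
  have hpos := one_add_solitonWeight_pos κ σ hc
  rw [exp_sub, exp_add, exp_log (hpos _ _), exp_log (hpos _ _), two_mul, exp_add,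
    exp_log (hpos _ _), solitonWeight_sub_one, solitonWeight_add_one]
  have hne := (hpos n t).ne'
  field_simp
  have hprod : exp (2 * κ) * exp (-(2 * κ)) = 1 := by rw [← exp_add, add_neg_cancel, exp_zero]
  linear_combination (solitonWeight c κ σ n t) ^ 2 * hprod + solitonWeight c κ σ n t * hcosh
    - 4 * solitonWeight c κ σ n t * sinh κ ^ 2 * hσ

end solitonWeight

/-- The one-soliton `q₁(n,t)` solves the Toda equations of motion
`q̈(n,t) = exp(−(q(n,t) − q(n−1,t))) − exp(−(q(n+1,t) − q(n,t)))`. -/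
theorem stmt_4 (κ γ σ qplus : ℝ) (hκ : 0 < κ) (hγ : 0 < γ) (hσ : σ = 1 ∨ σ = -1)
    (q : ℤ → ℝ → ℝ)
    (hq : ∀ (n : ℤ) (t : ℝ), q n t = qplus + Real.log
      ((1 + γ / (1 - Real.exp (-2 * κ)) * Real.exp (-2 * κ * (n : ℝ) + 2 * σ * Real.sinh κ * t)) /
       (1 + γ / (1 - Real.exp (-2 * κ)) *
          Real.exp (-2 * κ * ((n : ℝ) + 1) + 2 * σ * Real.sinh κ * t)))) :
    (∀ n : ℤ, Differentiable ℝ (q n)) ∧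
    ∀ (n : ℤ) (t : ℝ), HasDerivAt (deriv (q n))
      (Real.exp (-(q n t - q (n - 1) t)) - Real.exp (-(q (n + 1) t - q n t))) t := by
  set c := γ / (1 - exp (-2 * κ))
  have hc : 0 ≤ c := div_nonneg hγ.le (sub_nonneg.2 (exp_le_one_iff.2 (by linarith)))
  have hσ2 : σ ^ 2 = 1 := by rcases hσ with rfl | rfl <;> norm_num
  refine toda_of_logTau (fun n t => log (1 + solitonWeight c κ σ n t)) qplus
    (fun n t => (hasDerivAt_log_one_add_solitonWeight κ σ hc n t).differentiableAt)
    (fun n t => ?_) q (fun n t => ?_)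
  · rw [exp_secondDiff_log_one_add_solitonWeight κ σ hσ2 hc, add_sub_cancel_left]
    exact hasDerivAt_deriv_log_one_add_solitonWeight κ σ hc n t
  · rw [hq, ← log_div (one_add_solitonWeight_pos κ σ hc n t).ne'
      (one_add_solitonWeight_pos κ σ hc (n + 1) t).ne']
    simp only [solitonWeight, Int.cast_add, Int.cast_one]
end

section
/- Let ζ ∈ (−1,0) ∪ (0,1) and γ ≥ 0, and define the one-soliton function f(z) = (γζ²·(z−ζ⁻¹)/(z−ζ) + 1 − ζ²) / ( sqrt(1−ζ²+γ) · sqrt(1−ζ²+ζ²γ) ) for complex z ≠ ζ. Then: (i) the residue of f at ζ, i.e. lim_{z→ζ} (z−ζ) f(z), equals −ζ γ f(ζ⁻¹); (ii) f(0) · lim_{z→∞} f(z) = 1; (iii) f(0) > 0. -/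
/-!
Write `a = 1 - ζ² + γ`, `b = 1 - ζ² + ζ²γ`. Then `f` is the Möbius map
`z ↦ (A (z - ζ⁻¹)/(z - ζ) + B) / (√a √b)` with `A = γζ²`, `B = 1 - ζ²`.
Its residue at `ζ` is `A (ζ - ζ⁻¹)/(√a √b) = -ζγ · B/(√a √b)`, and `B/(√a √b) = f(ζ⁻¹)`
because the first term vanishes at `ζ⁻¹`. Moreover `f 0 = a/(√a √b) = √a/√b` and
`f ∞ = (A + B)/(√a √b) = b/(√a √b) = √b/√a`, so both are positive and mutually inverse.
-/

open Filter Topology Bornology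

section MobiusLimits

variable {𝕜 : Type*} [NormedField 𝕜]

lemma tendsto_sub_div_sub_cobounded (p q : 𝕜) :
    Tendsto (fun z => (z - q) / (z - p)) (cobounded 𝕜) (𝓝 1) := by
  have hinv : Tendsto (fun z => (z - p)⁻¹) (cobounded 𝕜) (𝓝 0) :=
    tendsto_inv₀_cobounded.comp (tendsto_sub_const_cobounded p)
  have hne : ∀ᶠ z in cobounded 𝕜, z - p ≠ 0 :=
    (tendsto_sub_const_cobounded p).eventually (eventually_ne_cobounded 0)
  have hlim := (hinv.const_mul (p - q)).const_add 1
  rw [mul_zero, add_zero] at hlim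
  refine hlim.congr' ?_
  filter_upwards [hne] with z hz
  field_simp
  ring

lemma tendsto_sub_mul_div_sub_nhdsNE (A B p q : 𝕜) :
    Tendsto (fun z => (z - p) * (A * (z - q) / (z - p) + B)) (𝓝[≠] p) (𝓝 (A * (p - q))) := by
  have hcont : Tendsto (fun z => A * (z - q) + B * (z - p)) (𝓝[≠] p) (𝓝 (A * (p - q))) := by
    have : Continuous (fun z => A * (z - q) + B * (z - p)) := by fun_prop
    simpa using (this.tendsto p).mono_left nhdsWithin_le_nhds
  refine hcont.congr' ?_
  filter_upwards [self_mem_nhdsWithin] with z hz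
  have : z - p ≠ 0 := sub_ne_zero.mpr hz
  field_simp

end MobiusLimits

lemma ofReal_div_sqrt_mul_sqrt {a : ℝ} (ha : 0 < a) (b : ℝ) :
    (a : ℂ) / ((√a : ℂ) * (√b : ℂ)) = ((√a / √b : ℝ) : ℂ) := by
  have h : (a : ℂ) = (√a : ℂ) * (√a : ℂ) := by
    rw [← Complex.ofReal_mul, Real.mul_self_sqrt ha.le]
  have : (√a : ℂ) ≠ 0 := by exact_mod_cast (Real.sqrt_pos.mpr ha).ne'
  rw [h, Complex.ofReal_div, mul_div_mul_left _ _ this]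

/-- Properties of the one-soliton function
`f(z) = (γζ²(z−ζ⁻¹)/(z−ζ) + 1 − ζ²)/(√(1−ζ²+γ)·√(1−ζ²+ζ²γ))`:
(i) the residue at `ζ` equals `−ζγ f(ζ⁻¹)`; (ii) `f(0)·lim_{z→∞} f(z) = 1`;
(iii) `f(0) > 0`. -/
theorem stmt_8 (ζ γ : ℝ) (hζ : ζ ∈ Set.Ioo (-1 : ℝ) 0 ∪ Set.Ioo (0 : ℝ) 1) (hγ : 0 ≤ γ)
    (f : ℂ → ℂ)
    (hf : ∀ z : ℂ, f z =
      ((γ : ℂ) * (ζ : ℂ) ^ 2 * (z - (ζ : ℂ)⁻¹) / (z - (ζ : ℂ)) + 1 - (ζ : ℂ) ^ 2) /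
        ((Real.sqrt (1 - ζ ^ 2 + γ) : ℂ) * (Real.sqrt (1 - ζ ^ 2 + ζ ^ 2 * γ) : ℂ))) :
    Filter.Tendsto (fun z => (z - (ζ : ℂ)) * f z) (nhdsWithin (ζ : ℂ) {(ζ : ℂ)}ᶜ)
      (nhds (-(ζ : ℂ) * (γ : ℂ) * f ((ζ : ℂ)⁻¹))) ∧
    (∃ L : ℂ, Filter.Tendsto f (Bornology.cobounded ℂ) (nhds L) ∧ f 0 * L = 1) ∧
    (∃ r : ℝ, f 0 = (r : ℂ) ∧ 0 < r) := by
  have hζ0 : (ζ : ℂ) ≠ 0 := by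
    rcases hζ with h | h <;> [exact_mod_cast h.2.ne; exact_mod_cast h.1.ne']
  have hζ1 : ζ ^ 2 < 1 := by rcases hζ with h | h <;> nlinarith [h.1, h.2]
  set a := 1 - ζ ^ 2 + γ with ha_def
  set b := 1 - ζ ^ 2 + ζ ^ 2 * γ with hb_def
  have ha : 0 < a := by linarith
  have hb : 0 < b := by positivity
  set S : ℂ := (√a : ℂ) * (√b : ℂ) with hS
  have hf' : f = fun z => ((γ * ζ ^ 2 : ℂ) * (z - (ζ : ℂ)⁻¹) / (z - ζ) + (1 - ζ ^ 2 : ℂ)) / S := by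
    funext z; rw [hf]; ring
  have hf0 : f 0 = ((√a / √b : ℝ) : ℂ) := by
    rw [hf, hS, ← ofReal_div_sqrt_mul_sqrt ha, ha_def]
    push_cast
    field_simp
    ring
  have hf_inv : f (ζ : ℂ)⁻¹ = (1 - ζ ^ 2) / S := by
    rw [hf, sub_self, mul_zero, zero_div, zero_add]
  have hL : (γ * ζ ^ 2 * 1 + (1 - ζ ^ 2) : ℂ) / S = ((√b / √a : ℝ) : ℂ) := by
    rw [← ofReal_div_sqrt_mul_sqrt hb, hS, mul_comm (√b : ℂ), hb_def]
    push_cast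
    ring
  have hres := (tendsto_sub_mul_div_sub_nhdsNE (γ * ζ ^ 2 : ℂ) (1 - ζ ^ 2) ζ ζ⁻¹).div_const S
  have hlim := ((tendsto_sub_div_sub_cobounded (ζ : ℂ) ζ⁻¹).const_mul (γ * ζ ^ 2 : ℂ)
    |>.add_const (1 - ζ ^ 2 : ℂ)).div_const S
  refine ⟨?_, ⟨((√b / √a : ℝ) : ℂ), ?_, ?_⟩, _, hf0, by positivity⟩
  · convert hres using 2
    · rw [hf']; ring
    · rw [hf_inv]; field_simp; ring
  · rw [hf', ← hL]
    convert hlim using 2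
    ring
  · rw [hf0, ← Complex.ofReal_mul, div_mul_div_comm, mul_comm, div_self (by positivity),
      Complex.ofReal_one]
end

section
/- Let θ₀ ∈ (−π,0) and z₀ = e^{iθ₀}, let ζ₁, …, ζ_m ∈ (−1,0), and let ρ : [−θ₀, 2π+θ₀] → (0,∞) be continuous with ρ(2π−θ) = ρ(θ) for all θ in this interval. Define T(z) = ( ∏_{k=1}^m |ζ_k| (z−ζ_k⁻¹)/(z−ζ_k) ) · exp( (1/(2π)) ∫_{−θ₀}^{2π+θ₀} log ρ(θ) · (e^{iθ}+z)/(e^{iθ}−z) dθ ). Then for every complex z not lying on the arc {e^{iθ} : θ ∈ [−θ₀, 2π+θ₀]} and with z ∉ {0, ζ_k, ζ_k⁻¹ : 1 ≤ k ≤ m}: (i) T(1/z) · T(z) = 1; (ii) conj(T(conj z)) = T(z), so in particular T is real-valued on the real axis; and (iii) T(0) > 0. -/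
open scoped Real ComplexConjugate

/-!
Each Blaschke factor `b(z) = |ζ| (z - ζ⁻¹)/(z - ζ)` has real coefficients and satisfies
`b(1/z) b(z) = |ζ|²/ζ² = 1`. The Herglotz kernel `K(w, z) = (w + z)/(w - z)` satisfies
`K(w, 1/z) = -K(1/w, z)` and `conj K(w, conj z) = K(conj w, z)`, and on the unit circle
`1/w = conj w = e^{-iθ}`. The substitution `θ ↦ 2π - θ` maps the arc `[-θ₀, 2π + θ₀]` onto itself,
fixes `ρ` and turns `e^{-iθ}` back into `e^{iθ}`; so the exponent of `T` is odd under `z ↦ 1/z`,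
commutes with conjugation, and at `z = 0` it is the real number `(2π)⁻¹ ∫ log ρ`.
-/

section Kernel

variable {K : Type*} [Field K]

def herglotzKernel (w z : K) : K := (w + z) / (w - z)

theorem herglotzKernel_inv {w z : K} (hw : w ≠ 0) (hz : z ≠ 0) :
    herglotzKernel w z⁻¹ = -herglotzKernel w⁻¹ z := by
  unfold herglotzKernel
  rcases eq_or_ne (w * z) 1 with hwz | hwz
  · rw [eq_inv_of_mul_eq_one_left hwz, inv_inv]
    simp
  · have h₁ : w - z⁻¹ ≠ 0 := fun h => hwz (by field_simp at h; linear_combination h)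
    have h₂ : w⁻¹ - z ≠ 0 := fun h => hwz (by field_simp at h; linear_combination -h)
    field_simp
    ring

theorem conj_herglotzKernel (w z : ℂ) :
    conj (herglotzKernel w z) = herglotzKernel (conj w) (conj z) := by
  simp only [herglotzKernel, map_div₀, map_add, map_sub]

end Kernel

section Blaschke

open Complex

noncomputable def blaschke (ζ : ℝ) (z : ℂ) : ℂ := ((|ζ| : ℝ) : ℂ) * ((z - (ζ : ℂ)⁻¹) / (z - ζ))

theorem blaschke_inv_mul_self {ζ : ℝ} {z : ℂ} (hζ : ζ ≠ 0) (hz : z ≠ 0) (hzζ : z ≠ ζ)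
    (hzζ' : z ≠ (ζ : ℂ)⁻¹) : blaschke ζ z⁻¹ * blaschke ζ z = 1 := by
  have hζ' : (ζ : ℂ) ≠ 0 := ofReal_ne_zero.mpr hζ
  have habs : ((|ζ| : ℝ) : ℂ) ^ 2 = (ζ : ℂ) ^ 2 := by exact_mod_cast sq_abs ζ
  have h₁ : z - ζ ≠ 0 := sub_ne_zero.mpr hzζ
  have h₂ : 1 - z * ζ ≠ 0 := fun h => hzζ' (eq_inv_of_mul_eq_one_left (sub_eq_zero.mp h).symm)
  unfold blaschke
  field_simp
  linear_combination (ζ - z) * (z * ζ - 1) * habs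

theorem conj_blaschke_conj (ζ : ℝ) (z : ℂ) : conj (blaschke ζ (conj z)) = blaschke ζ z := by
  simp [blaschke, map_div₀]

theorem blaschke_zero (ζ : ℝ) : blaschke ζ 0 = ((|ζ|⁻¹ : ℝ) : ℂ) := by
  rcases eq_or_ne ζ 0 with rfl | hζ
  · simp [blaschke]
  · have hζ' : (ζ : ℂ) ≠ 0 := ofReal_ne_zero.mpr hζ
    have habs : ((|ζ| : ℝ) : ℂ) ^ 2 = (ζ : ℂ) ^ 2 := by exact_mod_cast sq_abs ζ
    have habs0 : ((|ζ| : ℝ) : ℂ) ≠ 0 := ofReal_ne_zero.mpr (abs_ne_zero.mpr hζ)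
    simp only [blaschke, zero_sub, neg_div_neg_eq, ofReal_inv]
    field_simp
    exact habs

end Blaschke

section Herglotz

open Complex intervalIntegral

noncomputable def herglotzIntegral (a b : ℝ) (f : ℝ → ℝ) (z : ℂ) : ℂ :=
  ∫ θ in a..b, (f θ : ℂ) * herglotzKernel (exp (θ * I)) z

variable {a b : ℝ} {f : ℝ → ℝ}

theorem integral_comp_exp_neg_mul_I_of_symm (g : ℂ → ℂ) (hab : a + b = 2 * π)
    (hf : ∀ θ ∈ Set.uIcc a b, f (2 * π - θ) = f θ) :
    ∫ θ in a..b, (f θ : ℂ) * g (exp (-(θ * I))) = ∫ θ in a..b, (f θ : ℂ) * g (exp (θ * I)) := by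
  have hexp : ∀ θ : ℝ, exp (((2 * π - θ : ℝ) : ℂ) * I) = exp (-(θ * I)) := fun θ => by
    rw [show ((2 * π - θ : ℝ) : ℂ) * I = -(θ * I) + 2 * π * I by push_cast; ring, exp_periodic]
  have hreflect := integral_comp_sub_left (a := a) (b := b)
    (fun θ : ℝ => (f θ : ℂ) * g (exp (θ * I))) (2 * π)
  rw [show 2 * π - b = a by linarith, show 2 * π - a = b by linarith] at hreflect
  rw [← hreflect]
  refine integral_congr fun θ hθ => ?_
  simp only [hf θ hθ, hexp]

theorem herglotzIntegral_conj_of_symm (hab : a + b = 2 * π)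
    (hf : ∀ θ ∈ Set.uIcc a b, f (2 * π - θ) = f θ) (z : ℂ) :
    conj (herglotzIntegral a b f (conj z)) = herglotzIntegral a b f z := by
  calc conj (herglotzIntegral a b f (conj z))
      = ∫ θ in a..b, (f θ : ℂ) * herglotzKernel (exp (-(θ * I))) z := by
        rw [herglotzIntegral, ← intervalIntegral_conj]
        refine integral_congr fun θ _ => ?_
        rw [map_mul, conj_ofReal, conj_herglotzKernel, conj_conj, ← exp_conj, map_mul,
          conj_ofReal, conj_I, mul_neg]
    _ = herglotzIntegral a b f z :=
        integral_comp_exp_neg_mul_I_of_symm (fun w => herglotzKernel w z) hab hf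

theorem herglotzIntegral_inv_of_symm (hab : a + b = 2 * π)
    (hf : ∀ θ ∈ Set.uIcc a b, f (2 * π - θ) = f θ) {z : ℂ} (hz : z ≠ 0) :
    herglotzIntegral a b f z⁻¹ = -herglotzIntegral a b f z := by
  calc herglotzIntegral a b f z⁻¹
      = -∫ θ in a..b, (f θ : ℂ) * herglotzKernel (exp (-(θ * I))) z := by
        rw [herglotzIntegral, ← integral_neg]
        refine integral_congr fun θ _ => ?_
        rw [herglotzKernel_inv (exp_ne_zero _) hz, ← exp_neg, mul_neg]
    _ = -herglotzIntegral a b f z := by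
        rw [integral_comp_exp_neg_mul_I_of_symm (fun w => herglotzKernel w z) hab hf,
          herglotzIntegral]

theorem herglotzIntegral_zero : herglotzIntegral a b f 0 = ((∫ θ in a..b, f θ : ℝ) : ℂ) := by
  simp [herglotzIntegral, herglotzKernel, integral_ofReal]

end Herglotz

theorem stmt_11_general (θ₀ : ℝ) (hθ₀ : θ₀ ∈ Set.Ioo (-π) 0) (m : ℕ) (ζ : Fin m → ℝ)
    (hζ : ∀ k, ζ k ∈ Set.Ioo (-1 : ℝ) 0)
    (ρ : ℝ → ℝ)
    (hρsym : ∀ θ ∈ Set.Icc (-θ₀) (2 * π + θ₀), ρ (2 * π - θ) = ρ θ)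
    (T : ℂ → ℂ)
    (hT : ∀ z : ℂ, T z =
      (∏ k, ((|ζ k| : ℝ) : ℂ) * ((z - (ζ k : ℂ)⁻¹) / (z - (ζ k : ℂ)))) *
        Complex.exp ((1 / (2 * (π : ℂ))) * ∫ θ in (-θ₀)..(2 * π + θ₀),
          (Real.log (ρ θ) : ℂ) *
            ((Complex.exp (θ * Complex.I) + z) / (Complex.exp (θ * Complex.I) - z)))) :
    (∀ z : ℂ,
      z ∉ {w : ℂ | ∃ θ ∈ Set.Icc (-θ₀) (2 * π + θ₀), w = Complex.exp (θ * Complex.I)} →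
      z ≠ 0 → (∀ k, z ≠ (ζ k : ℂ)) → (∀ k, z ≠ (ζ k : ℂ)⁻¹) →
      (T z⁻¹ * T z = 1 ∧
       (starRingEnd ℂ) (T ((starRingEnd ℂ) z)) = T z ∧
       (z.im = 0 → (T z).im = 0))) ∧
    (∃ r : ℝ, T 0 = (r : ℂ) ∧ 0 < r) := by
  set c : ℂ := 1 / (2 * π)
  set logρ : ℝ → ℝ := fun θ => Real.log (ρ θ)
  have hT' : ∀ z, T z = (∏ k, blaschke (ζ k) z) *
      Complex.exp (c * herglotzIntegral (-θ₀) (2 * π + θ₀) logρ z) := hT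
  have hζ0 : ∀ k, ζ k ≠ 0 := fun k => (hζ k).2.ne
  have hends : -θ₀ + (2 * π + θ₀) = 2 * π := by ring
  have hlogρ : ∀ θ ∈ Set.uIcc (-θ₀) (2 * π + θ₀), logρ (2 * π - θ) = logρ θ := by
    rw [Set.uIcc_of_le (by linarith [hθ₀.1])]
    exact fun θ hθ => congrArg Real.log (hρsym θ hθ)
  have hconj : ∀ z, conj (T (conj z)) = T z := fun z => by
    have hc : conj c = c := by simp [c, map_ofNat]
    simp only [hT', map_mul, map_prod, ← Complex.exp_conj, hc, conj_blaschke_conj,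
      herglotzIntegral_conj_of_symm hends hlogρ]
  refine ⟨fun z _ hz0 hzζ hzζ' => ⟨?_, hconj z, fun him => ?_⟩, ?_⟩
  · rw [hT', hT', mul_mul_mul_comm, ← Finset.prod_mul_distrib, ← Complex.exp_add,
      herglotzIntegral_inv_of_symm hends hlogρ hz0, mul_neg, neg_add_cancel, Complex.exp_zero,
      mul_one]
    exact Finset.prod_eq_one fun k _ => blaschke_inv_mul_self (hζ0 k) hz0 (hzζ k) (hzζ' k)
  · have h := hconj z
    rwa [Complex.conj_eq_iff_im.mpr him, Complex.conj_eq_iff_im] at h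
  · refine ⟨(∏ k, |ζ k|⁻¹) * Real.exp ((2 * π)⁻¹ * ∫ θ in (-θ₀)..(2 * π + θ₀), logρ θ), ?_, ?_⟩
    · simp only [hT', blaschke_zero, herglotzIntegral_zero, c]
      push_cast
      ring_nf
    · exact mul_pos (Finset.prod_pos fun k _ => inv_pos.mpr (abs_pos.mpr (hζ0 k)))
        (Real.exp_pos _)

/-- Properties of the partial transmission coefficient `T(z,z₀)` associated with a stationary
phase point `z₀ = e^{iθ₀}` on the unit circle: for `z` off the arc and away from `0`, the
`ζ_k` and the `ζ_k⁻¹` one has (i) `T(1/z)T(z) = 1`, (ii) `conj(T(conj z)) = T(z)` (so `T` is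
real on the real axis), and (iii) `T(0) > 0`. -/
theorem stmt_11 (θ₀ : ℝ) (hθ₀ : θ₀ ∈ Set.Ioo (-π) 0) (m : ℕ) (ζ : Fin m → ℝ)
    (hζ : ∀ k, ζ k ∈ Set.Ioo (-1 : ℝ) 0)
    (ρ : ℝ → ℝ)
    (hρcont : ContinuousOn ρ (Set.Icc (-θ₀) (2 * π + θ₀)))
    (hρpos : ∀ θ ∈ Set.Icc (-θ₀) (2 * π + θ₀), 0 < ρ θ)
    (hρsym : ∀ θ ∈ Set.Icc (-θ₀) (2 * π + θ₀), ρ (2 * π - θ) = ρ θ)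
    (T : ℂ → ℂ)
    (hT : ∀ z : ℂ, T z =
      (∏ k, ((|ζ k| : ℝ) : ℂ) * ((z - (ζ k : ℂ)⁻¹) / (z - (ζ k : ℂ)))) *
        Complex.exp ((1 / (2 * (π : ℂ))) * ∫ θ in (-θ₀)..(2 * π + θ₀),
          (Real.log (ρ θ) : ℂ) *
            ((Complex.exp (θ * Complex.I) + z) / (Complex.exp (θ * Complex.I) - z)))) :
    (∀ z : ℂ,
      z ∉ {w : ℂ | ∃ θ ∈ Set.Icc (-θ₀) (2 * π + θ₀), w = Complex.exp (θ * Complex.I)} →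
      z ≠ 0 → (∀ k, z ≠ (ζ k : ℂ)) → (∀ k, z ≠ (ζ k : ℂ)⁻¹) →
      (T z⁻¹ * T z = 1 ∧
       (starRingEnd ℂ) (T ((starRingEnd ℂ) z)) = T z ∧
       (z.im = 0 → (T z).im = 0))) ∧
    (∃ r : ℝ, T 0 = (r : ℂ) ∧ 0 < r) :=
  stmt_11_general θ₀ hθ₀ m ζ hζ ρ hρsym T hT
end

section
/- Let θ₀ ∈ (−π,0) and z₀ = e^{iθ₀}, let ζ₁, …, ζ_m ∈ (−1,0), and let ρ : [−θ₀, 2π+θ₀] → (0,∞) be continuous with ρ(2π−θ) = ρ(θ). Define T(z) = ( ∏_{k=1}^m |ζ_k| (z−ζ_k⁻¹)/(z−ζ_k) ) · exp( (1/(2π)) ∫_{−θ₀}^{2π+θ₀} log ρ(θ) · (e^{iθ}+z)/(e^{iθ}−z) dθ ). Then for every point z = e^{iφ} on the unit circle with φ ∈ (θ₀, −θ₀) (i.e. z not on the closed arc {e^{iθ} : θ ∈ [−θ₀, 2π+θ₀]}), one has |T(z)| = 1. -/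
open scoped Real ComplexConjugate

/-!
On the unit circle both factors of `T` are unimodular. For real `ζ ≠ 0` and `|z| = 1` one has
`ζ (z - ζ⁻¹) = -z · conj (z - ζ)`, so each Blaschke factor has modulus one. The Herglotz kernel
`(w + z) / (w - z)` is purely imaginary whenever `|w| = |z|`; hence so is the integral of `log ρ`
against it, and its exponential has modulus one.
-/

namespace Complex

lemma re_add_div_sub_eq_zero_of_norm_eq {a b : ℂ} (h : ‖a‖ = ‖b‖) :
    ((a + b) / (a - b)).re = 0 := by
  have hsq : normSq a = normSq b := by rw [normSq_eq_norm_sq, normSq_eq_norm_sq, h]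
  rw [div_re, ← add_div]
  have hnum : (a + b).re * (a - b).re + (a + b).im * (a - b).im = 0 := by
    simp only [add_re, sub_re, add_im, sub_im]
    simp only [normSq_apply] at hsq
    linarith
  rw [hnum, zero_div]

lemma norm_mul_norm_sub_inv_of_norm_eq_one {a z : ℂ} (ha : a ≠ 0) (hz : ‖z‖ = 1) :
    ‖a‖ * ‖z - a⁻¹‖ = ‖z - conj a‖ := by
  have hzconj : z * conj z = 1 := by
    rw [mul_conj, normSq_eq_norm_sq, hz]; norm_num
  have key : a * (z - a⁻¹) = -z * conj (z - conj a) := by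
    rw [map_sub, conj_conj, mul_sub, mul_inv_cancel₀ ha]
    linear_combination hzconj
  rw [← norm_mul, key, norm_mul, norm_neg, hz, norm_conj, one_mul]

lemma norm_abs_mul_sub_inv_div_sub_eq_one {r : ℝ} {z : ℂ} (hr₀ : r ≠ 0) (hr₁ : |r| ≠ 1)
    (hz : ‖z‖ = 1) : ‖((|r| : ℝ) : ℂ) * ((z - (r : ℂ)⁻¹) / (z - r))‖ = 1 := by
  have hne : z - r ≠ 0 := by
    rw [sub_ne_zero]
    rintro rfl
    exact hr₁ (by simpa using hz)
  have hblaschke := norm_mul_norm_sub_inv_of_norm_eq_one (ofReal_ne_zero.mpr hr₀) hz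
  rw [conj_ofReal, norm_real, Real.norm_eq_abs] at hblaschke
  rw [norm_mul, norm_div, norm_real, Real.norm_eq_abs, abs_abs, ← mul_div_assoc, hblaschke,
    div_self (norm_ne_zero_iff.mpr hne)]

end Complex

namespace intervalIntegral

lemma re_integral_eq_zero_of_re_eq_zero {f : ℝ → ℂ} {a b : ℝ} (hf : ∀ x, (f x).re = 0) :
    (∫ x in a..b, f x).re = 0 := by
  have hf' : f = fun x => ((f x).im : ℂ) * Complex.I :=
    funext fun x => Complex.ext (by simp [hf]) (by simp)
  rw [hf', integral_mul_const, integral_ofReal]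
  simp

end intervalIntegral

open Complex in
lemma norm_exp_herglotz_integral_eq_one {z : ℂ} (hz : ‖z‖ = 1) (u : ℝ → ℝ) (c a b : ℝ) :
    ‖exp (c * ∫ θ in a..b, (u θ : ℂ) * ((exp (θ * I) + z) / (exp (θ * I) - z)))‖ = 1 := by
  have hkernel (θ : ℝ) : ((exp (θ * I) + z) / (exp (θ * I) - z)).re = 0 :=
    re_add_div_sub_eq_zero_of_norm_eq (by rw [norm_exp_ofReal_mul_I, hz])
  rw [norm_exp, re_ofReal_mul, intervalIntegral.re_integral_eq_zero_of_re_eq_zero, mul_zero,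
    Real.exp_zero]
  intro θ
  rw [re_ofReal_mul, hkernel, mul_zero]

theorem stmt_12_general (θ₀ : ℝ) (m : ℕ) (ζ : Fin m → ℝ)
    (hζ : ∀ k, ζ k ∈ Set.Ioo (-1 : ℝ) 0)
    (ρ : ℝ → ℝ)
    (T : ℂ → ℂ)
    (hT : ∀ z : ℂ, T z =
      (∏ k, ((|ζ k| : ℝ) : ℂ) * ((z - (ζ k : ℂ)⁻¹) / (z - (ζ k : ℂ)))) *
        Complex.exp ((1 / (2 * (π : ℂ))) * ∫ θ in (-θ₀)..(2 * π + θ₀),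
          (Real.log (ρ θ) : ℂ) *
            ((Complex.exp (θ * Complex.I) + z) / (Complex.exp (θ * Complex.I) - z)))) :
    ∀ φ : ℝ, φ ∈ Set.Ioo θ₀ (-θ₀) →
      ‖T (Complex.exp (φ * Complex.I))‖ = 1 := by
  intro φ _
  have hz := Complex.norm_exp_ofReal_mul_I φ
  have hc : (1 / (2 * (π : ℂ))) = ((1 / (2 * π) : ℝ) : ℂ) := by push_cast; rfl
  rw [hT, norm_mul, norm_prod, hc, norm_exp_herglotz_integral_eq_one hz, mul_one]
  refine Finset.prod_eq_one fun k _ => Complex.norm_abs_mul_sub_inv_div_sub_eq_one ?_ ?_ hz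
  · exact (hζ k).2.ne
  · rw [abs_of_neg (hζ k).2]
    linarith [(hζ k).1]

/-- The partial transmission coefficient `T(z,z₀)` has modulus one on the part of the unit
circle complementary to the arc `Σ(z₀) = {e^{iθ} : θ ∈ [−θ₀, 2π+θ₀]}`. -/
theorem stmt_12 (θ₀ : ℝ) (hθ₀ : θ₀ ∈ Set.Ioo (-π) 0) (m : ℕ) (ζ : Fin m → ℝ)
    (hζ : ∀ k, ζ k ∈ Set.Ioo (-1 : ℝ) 0)
    (ρ : ℝ → ℝ)
    (hρcont : ContinuousOn ρ (Set.Icc (-θ₀) (2 * π + θ₀)))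
    (hρpos : ∀ θ ∈ Set.Icc (-θ₀) (2 * π + θ₀), 0 < ρ θ)
    (hρsym : ∀ θ ∈ Set.Icc (-θ₀) (2 * π + θ₀), ρ (2 * π - θ) = ρ θ)
    (T : ℂ → ℂ)
    (hT : ∀ z : ℂ, T z =
      (∏ k, ((|ζ k| : ℝ) : ℂ) * ((z - (ζ k : ℂ)⁻¹) / (z - (ζ k : ℂ)))) *
        Complex.exp ((1 / (2 * (π : ℂ))) * ∫ θ in (-θ₀)..(2 * π + θ₀),
          (Real.log (ρ θ) : ℂ) *
            ((Complex.exp (θ * Complex.I) + z) / (Complex.exp (θ * Complex.I) - z)))) :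
    ∀ φ : ℝ, φ ∈ Set.Ioo θ₀ (-θ₀) →
      ‖T (Complex.exp (φ * Complex.I))‖ = 1 :=
  stmt_12_general θ₀ m ζ hζ ρ T hT
end

section
/- Let θ₀ ∈ (−π,0), z₀ = e^{iθ₀}, and c ∈ ℝ. Then for every complex z with |z| < 1, exp( (c/(2π)) ∫_{−θ₀}^{2π+θ₀} (e^{iθ}+z)/(e^{iθ}−z) dθ ) = ( −conj(z₀) · (z−z₀)/(z−conj(z₀)) )^{−ic/π}, where the complex power w ↦ w^{−ic/π} is taken with the principal branch of the logarithm (branch cut along the negative real axis). -/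
open scoped Real

/-!
The integrand is the Schwarz kernel `K(θ) = (e^{iθ} + z)/(e^{iθ} - z)`, with primitive
`θ - 2i log(1 - z e^{-iθ})`; the logarithm stays on its principal branch because `|z| < 1`.
For the arc integral `J` this gives `exp(iJ/2) = -z₀ (1 - z conj z₀)/(1 - z z₀)`, which is the base
`w` of the power. The real part of `K` is the Poisson kernel: it is positive and, the primitive
gaining `2π` over a period, integrates to `2π` over the full circle. The arc being a proper subarc,
`0 < Re J < 2π`, so `iJ/2` is the principal logarithm of `w` and `w^{-ic/π} = exp(cJ/(2π))`.
-/

open Complex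

noncomputable def schwarzKernel (z : ℂ) (θ : ℝ) : ℂ :=
  (exp (θ * I) + z) / (exp (θ * I) - z)

noncomputable def schwarzPrimitive (z : ℂ) (θ : ℝ) : ℂ :=
  θ - 2 * I * log (1 - z * exp (-θ * I))

section

variable {z : ℂ}

lemma exp_ofReal_mul_I_sub_ne_zero (hz : ‖z‖ < 1) (θ : ℝ) : exp (θ * I) - z ≠ 0 := by
  rw [sub_ne_zero]
  rintro rfl
  simp at hz

lemma re_add_div_sub_pos {u : ℂ} (h : ‖z‖ < ‖u‖) : 0 < ((u + z) / (u - z)).re := by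
  have hne : u - z ≠ 0 := by
    rw [sub_ne_zero]; rintro rfl; exact h.false
  have hnum : ((u + z) / (u - z)).re = (normSq u - normSq z) / normSq (u - z) := by
    rw [div_re, ← add_div]
    congr 1
    simp only [add_re, sub_re, add_im, sub_im, normSq_apply]
    ring
  have hlt : normSq z < normSq u := by
    rw [normSq_eq_norm_sq, normSq_eq_norm_sq]
    gcongr
  rw [hnum]
  exact div_pos (sub_pos.mpr hlt) (normSq_pos.mpr hne)

lemma one_sub_mul_exp_mem_slitPlane (hz : ‖z‖ < 1) (θ : ℝ) :
    1 - z * exp (-θ * I) ∈ slitPlane := by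
  rw [sub_eq_add_neg]
  apply mem_slitPlane_of_norm_lt_one
  rwa [norm_neg, norm_mul, ← ofReal_neg, norm_exp_ofReal_mul_I, mul_one]

lemma re_schwarzKernel_pos (hz : ‖z‖ < 1) (θ : ℝ) : 0 < (schwarzKernel z θ).re :=
  re_add_div_sub_pos (by rwa [norm_exp_ofReal_mul_I])

lemma continuous_schwarzKernel (hz : ‖z‖ < 1) : Continuous (schwarzKernel z) :=
  Continuous.div (by fun_prop) (by fun_prop) (exp_ofReal_mul_I_sub_ne_zero hz)

lemma hasDerivAt_schwarzPrimitive (hz : ‖z‖ < 1) (θ : ℝ) :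
    HasDerivAt (schwarzPrimitive z) (schwarzKernel z θ) θ := by
  have hslit := one_sub_mul_exp_mem_slitPlane hz θ
  have hexp : HasDerivAt (fun t : ℝ => exp (-t * I)) (exp (-θ * I) * -I) θ := by
    simpa using ((hasDerivAt_id θ).ofReal_comp.neg.mul_const I).cexp
  have h : HasDerivAt (schwarzPrimitive z)
      (((1 : ℝ) : ℂ) - 2 * I * (-(z * (exp (-θ * I) * -I)) / (1 - z * exp (-θ * I)))) θ :=
    (hasDerivAt_id θ).ofReal_comp.sub
      (((hexp.const_mul z).const_sub 1).clog_real hslit |>.const_mul (2 * I))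
  refine h.congr_deriv ?_
  have hE : exp (θ * I) * exp (-θ * I) = 1 := by rw [← exp_add]; simp
  have hden₁ := exp_ofReal_mul_I_sub_ne_zero hz θ
  have hden₂ : 1 - z * exp (-θ * I) ≠ 0 := slitPlane_ne_zero hslit
  unfold schwarzKernel
  generalize exp (θ * I) = u at *
  generalize exp (-θ * I) = v at *
  rw [ofReal_one]
  field_simp
  linear_combination (2 * z ^ 2 * v - 2 * z * v * u) * I_sq + 2 * z * hE

lemma integral_schwarzKernel (hz : ‖z‖ < 1) (a b : ℝ) :
    ∫ θ in a..b, schwarzKernel z θ = schwarzPrimitive z b - schwarzPrimitive z a :=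
  intervalIntegral.integral_eq_sub_of_hasDerivAt (fun θ _ => hasDerivAt_schwarzPrimitive hz θ)
    ((continuous_schwarzKernel hz).intervalIntegrable a b)

lemma schwarzPrimitive_add_two_pi (θ : ℝ) :
    schwarzPrimitive z (θ + 2 * π) = schwarzPrimitive z θ + 2 * π := by
  have h : exp (-↑(θ + 2 * π) * I) = exp (-θ * I) := by
    rw [show -↑(θ + 2 * π) * I = -θ * I - 2 * π * I by push_cast; ring]
    exact exp_periodic.sub_eq _
  simp only [schwarzPrimitive, h]
  push_cast
  ring

lemma re_integral_schwarzKernel_pos (hz : ‖z‖ < 1) {a b : ℝ} (hab : a < b) :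
    0 < (∫ θ in a..b, schwarzKernel z θ).re := by
  have hint := (continuous_schwarzKernel hz).intervalIntegrable (μ := MeasureTheory.volume) a b
  have hre := intervalIntegral.intervalIntegral_re hint
  simp only [RCLike.re_to_complex] at hre
  rw [← hre]
  exact intervalIntegral.intervalIntegral_pos_of_pos_on
    ((continuous_re.comp (continuous_schwarzKernel hz)).intervalIntegrable a b)
    (fun θ _ => re_schwarzKernel_pos hz θ) hab

lemma re_integral_schwarzKernel_lt_two_pi (hz : ‖z‖ < 1) {a b : ℝ} (hb : b < a + 2 * π) :
    (∫ θ in a..b, schwarzKernel z θ).re < 2 * π := by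
  have h := re_integral_schwarzKernel_pos hz hb
  rw [integral_schwarzKernel hz, schwarzPrimitive_add_two_pi] at h
  rw [integral_schwarzKernel hz]
  simp only [sub_re, add_re] at h ⊢
  norm_cast at h
  linarith

lemma exp_I_div_two_mul_integral_schwarzKernel (hz : ‖z‖ < 1) (a b : ℝ) :
    exp (I / 2 * ∫ θ in a..b, schwarzKernel z θ) =
      exp ((b - a) / 2 * I) * ((1 - z * exp (-b * I)) / (1 - z * exp (-a * I))) := by
  rw [integral_schwarzKernel hz, schwarzPrimitive, schwarzPrimitive,
    show ∀ x y : ℂ, I / 2 * (b - 2 * I * x - (a - 2 * I * y)) = (b - a) / 2 * I + (x - y) by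
      intro x y; linear_combination (y - x) * I_sq,
    exp_add, exp_sub, exp_log (slitPlane_ne_zero (one_sub_mul_exp_mem_slitPlane hz b)),
    exp_log (slitPlane_ne_zero (one_sub_mul_exp_mem_slitPlane hz a))]

lemma exp_I_div_two_mul_integral_schwarzKernel_arc (hz : ‖z‖ < 1) (θ₀ : ℝ) :
    exp (I / 2 * ∫ θ in (-θ₀)..(2 * π + θ₀), schwarzKernel z θ) =
      -exp (θ₀ * I) * ((1 - z * exp (-θ₀ * I)) / (1 - z * exp (θ₀ * I))) := by
  rw [exp_I_div_two_mul_integral_schwarzKernel hz]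
  have hmid : exp ((↑(2 * π + θ₀) - ↑(-θ₀)) / 2 * I) = -exp (θ₀ * I) := by
    rw [show (↑(2 * π + θ₀) - ↑(-θ₀)) / 2 * I = θ₀ * I + π * I by push_cast; ring,
      exp_add, exp_pi_mul_I, mul_neg_one]
  have hend : exp (-↑(2 * π + θ₀) * I) = exp (-θ₀ * I) := by
    rw [show -↑(2 * π + θ₀) * I = -θ₀ * I - 2 * π * I by push_cast; ring]
    exact exp_periodic.sub_eq _
  rw [hmid, hend]
  push_cast
  rw [neg_neg]

lemma neg_mul_sub_div_sub_eq {u v : ℂ} (huv : u * v = 1) (z : ℂ) :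
    -v * (z - u) / (z - v) = -u * ((1 - z * v) / (1 - z * u)) := by
  have hv : -v ≠ 0 := neg_ne_zero.mpr (right_ne_zero_of_mul_eq_one huv)
  rw [show z - u = -u * (1 - z * v) by linear_combination -z * huv,
    show z - v = -v * (1 - z * u) by linear_combination -z * huv,
    mul_div_mul_left _ _ hv, mul_div_assoc]

end

/-- The Cauchy-type integral over the arc `{e^{iθ} : θ ∈ [−θ₀, 2π+θ₀]}` exponentiates to the
singular factor `(−conj(z₀)(z−z₀)/(z−conj(z₀)))^{−ic/π}` (principal branch), for `|z| < 1`. -/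
theorem stmt_13 (θ₀ : ℝ) (hθ₀ : θ₀ ∈ Set.Ioo (-π) 0) (c : ℝ) (z : ℂ)
    (hz : ‖z‖ < 1) :
    Complex.exp (((c : ℂ) / (2 * (π : ℂ))) * ∫ θ in (-θ₀)..(2 * π + θ₀),
        (Complex.exp (θ * Complex.I) + z) / (Complex.exp (θ * Complex.I) - z)) =
      (-(starRingEnd ℂ) (Complex.exp (θ₀ * Complex.I)) *
          (z - Complex.exp (θ₀ * Complex.I)) /
          (z - (starRingEnd ℂ) (Complex.exp (θ₀ * Complex.I)))) ^
        (-(Complex.I * (c : ℂ) / (π : ℂ))) := by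
  obtain ⟨hlo, hhi⟩ := hθ₀
  change exp (c / (2 * π) * ∫ θ in (-θ₀)..(2 * π + θ₀), schwarzKernel z θ) = _
  set J := ∫ θ in (-θ₀)..(2 * π + θ₀), schwarzKernel z θ
  have hJ_pos : 0 < J.re := re_integral_schwarzKernel_pos hz (by linarith)
  have hJ_lt : J.re < 2 * π := re_integral_schwarzKernel_lt_two_pi hz (by linarith)
  have hbase : exp (I / 2 * J) = -(starRingEnd ℂ) (exp (θ₀ * I)) * (z - exp (θ₀ * I)) /
      (z - (starRingEnd ℂ) (exp (θ₀ * I))) := by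
    have hconj : (starRingEnd ℂ) (exp (θ₀ * I)) = exp (-θ₀ * I) := by
      rw [← exp_conj, map_mul, conj_ofReal, conj_I, neg_mul, mul_neg]
    rw [hconj, neg_mul_sub_div_sub_eq (by rw [← exp_add]; simp),
      exp_I_div_two_mul_integral_schwarzKernel_arc hz]
  have hlog : log (exp (I / 2 * J)) = I / 2 * J := by
    have him : (I / 2 * J).im = J.re / 2 := by simp [div_eq_inv_mul]
    apply log_exp <;> rw [him] <;> linarith
  rw [← hbase, cpow_def_of_ne_zero (exp_ne_zero _), hlog]
  congr 1
  have hπ : (π : ℂ) ≠ 0 := ofReal_ne_zero.mpr Real.pi_ne_zero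
  field_simp
  linear_combination ((c : ℂ) * J) * I_sq
end

section
/- Let l ∈ ℕ and let R̂ : ℤ → ℂ satisfy Σ_{k∈ℤ} |R̂(k)| < ∞ and Σ_{k≥1} k^l |R̂(−k)| < ∞. Fix 0 < ε < 1 and 0 < β₀ < β, and for t > 0 set K(t) = ⌊ β₀ t / (−log(1−ε)) ⌋. Then: (i) for every t > 0 and every complex z with 1−ε ≤ |z| ≤ 1, the series R_{a,t}(z) = Σ_{k ≥ −K(t)} R̂(k) z^k converges absolutely and satisfies |R_{a,t}(z)| e^{−βt} ≤ (Σ_{k∈ℤ} |R̂(k)|) · e^{−(β−β₀)t}; (ii) for every t > 0 with K(t) ≥ 1 and every z with |z| = 1, the remainder R_{r,t}(z) = Σ_{k ≤ −K(t)−1} R̂(k) z^k satisfies |R_{r,t}(z)| ≤ K(t)^{−l} · Σ_{k≥1} k^l |R̂(−k)|; in particular |R_{r,t}(z)| = O(t^{−l}) as t → ∞, uniformly on |z| = 1. -/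
/-!
On `r ≤ |z| ≤ 1` every power `z^k` with `k ≥ -K` has modulus at most `r^{-K}`, and for
`r = 1 - ε` and `K = ⌊β₀t / (-log r)⌋` this is at most `e^{β₀t}`; this bounds the analytic part.
On the unit circle the remainder is dominated by `Σ_{k > K} |R̂(-k)| ≤ K^{-l} Σ_k k^l |R̂(-k)|`,
and `⌊x⌋ ≥ x/2` for `x ≥ 1` gives `K(t) ≥ β₀t / (-2 log r)` for large `t`, hence the `O(t^{-l})`
rate.
-/

noncomputable section

section FourierSplitting

variable {𝕜 : Type*} [NormedDivisionRing 𝕜]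

/-- `R_{a,t}` for `K = K(t)`, summed over `j = k + K`. -/
def analyticPart (R : ℤ → 𝕜) (K : ℕ) (z : 𝕜) : 𝕜 :=
  ∑' j : ℕ, R ((j : ℤ) - (K : ℤ)) * z ^ ((j : ℤ) - (K : ℤ))

/-- `R_{r,t}` for `K = K(t)`, summed over `j = -K - 1 - k`. -/
def remainderPart (R : ℤ → 𝕜) (K : ℕ) (z : 𝕜) : 𝕜 :=
  ∑' j : ℕ, R (-(K : ℤ) - 1 - (j : ℤ)) * z ^ (-(K : ℤ) - 1 - (j : ℤ))

lemma norm_zpow_le_of_le_norm {z : 𝕜} {r : ℝ} (hr : 0 < r) (hrz : r ≤ ‖z‖) (hz : ‖z‖ ≤ 1)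
    (K : ℕ) {n : ℤ} (hn : -(K : ℤ) ≤ n) : ‖z ^ n‖ ≤ r ^ (-(K : ℤ)) := by
  rw [norm_zpow]
  calc ‖z‖ ^ n ≤ ‖z‖ ^ (-(K : ℤ)) := zpow_le_zpow_right_of_le_one₀ (hr.trans_le hrz) hz hn
    _ ≤ r ^ (-(K : ℤ)) := by
      rw [zpow_neg, zpow_neg, zpow_natCast, zpow_natCast]
      exact inv_anti₀ (pow_pos hr K) (pow_le_pow_left₀ hr.le hrz K)

variable {z : 𝕜} {r : ℝ}

lemma norm_analyticPart_term_le (R : ℤ → 𝕜) (hr : 0 < r) (hrz : r ≤ ‖z‖) (hz : ‖z‖ ≤ 1)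
    (K j : ℕ) :
    ‖R ((j : ℤ) - (K : ℤ)) * z ^ ((j : ℤ) - (K : ℤ))‖ ≤
      ‖R ((j : ℤ) - (K : ℤ))‖ * r ^ (-(K : ℤ)) := by
  rw [norm_mul]
  gcongr
  exact norm_zpow_le_of_le_norm hr hrz hz K (by omega)

lemma summable_norm_analyticPart_term {R : ℤ → 𝕜} (hr : 0 < r) (hrz : r ≤ ‖z‖) (hz : ‖z‖ ≤ 1)
    (K : ℕ) (hR : Summable fun k : ℤ => ‖R k‖) :
    Summable fun j : ℕ => ‖R ((j : ℤ) - (K : ℤ)) * z ^ ((j : ℤ) - (K : ℤ))‖ :=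
  .of_nonneg_of_le (fun _ => norm_nonneg _) (norm_analyticPart_term_le R hr hrz hz K)
    ((hR.comp_injective ((sub_left_injective).comp Nat.cast_injective)).mul_right _)

lemma norm_analyticPart_le {R : ℤ → 𝕜} (hr : 0 < r) (hrz : r ≤ ‖z‖) (hz : ‖z‖ ≤ 1) (K : ℕ)
    (hR : Summable fun k : ℤ => ‖R k‖) :
    ‖analyticPart R K z‖ ≤ (∑' k : ℤ, ‖R k‖) * r ^ (-(K : ℤ)) := by
  have hinj : Function.Injective fun j : ℕ => (j : ℤ) - (K : ℤ) :=
    (sub_left_injective).comp Nat.cast_injective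
  calc ‖analyticPart R K z‖ ≤ (∑' j : ℕ, ‖R ((j : ℤ) - (K : ℤ))‖) * r ^ (-(K : ℤ)) :=
        tsum_of_norm_bounded ((hR.comp_injective hinj).hasSum.mul_right _)
          (norm_analyticPart_term_le R hr hrz hz K)
    _ ≤ (∑' k : ℤ, ‖R k‖) * r ^ (-(K : ℤ)) := by
        gcongr
        exact tsum_comp_le_tsum_of_inj hR (fun _ => norm_nonneg _) hinj

lemma norm_remainderPart_term_le (R : ℤ → 𝕜) (hz : ‖z‖ = 1) {K : ℕ} (hK : 0 < K) (l j : ℕ) :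
    ‖R (-(K : ℤ) - 1 - (j : ℤ)) * z ^ (-(K : ℤ) - 1 - (j : ℤ))‖ ≤
      ((K + 1 + j : ℕ) : ℝ) ^ l * ‖R (-((K + 1 + j : ℕ) : ℤ))‖ / (K : ℝ) ^ l := by
  have hidx : -(K : ℤ) - 1 - (j : ℤ) = -((K + 1 + j : ℕ) : ℤ) := by push_cast; ring
  rw [norm_mul, norm_zpow, hz, one_zpow, mul_one, hidx, le_div_iff₀ (by positivity), mul_comm]
  gcongr
  omega

lemma norm_remainderPart_le {R : ℤ → 𝕜} {l : ℕ}
    (hR : Summable fun k : ℕ => (k : ℝ) ^ l * ‖R (-(k : ℤ))‖) (hz : ‖z‖ = 1) {K : ℕ} (hK : 0 < K) :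
    ‖remainderPart R K z‖ ≤ (∑' k : ℕ, (k : ℝ) ^ l * ‖R (-(k : ℤ))‖) / (K : ℝ) ^ l := by
  have hinj := add_right_injective (K + 1)
  calc ‖remainderPart R K z‖
      ≤ (∑' j : ℕ, ((K + 1 + j : ℕ) : ℝ) ^ l * ‖R (-((K + 1 + j : ℕ) : ℤ))‖) / (K : ℝ) ^ l :=
        tsum_of_norm_bounded ((hR.comp_injective hinj).hasSum.div_const _)
          (norm_remainderPart_term_le R hz hK l)
    _ ≤ (∑' k : ℕ, (k : ℝ) ^ l * ‖R (-(k : ℤ))‖) / (K : ℝ) ^ l :=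
        div_le_div_of_nonneg_right (tsum_comp_le_tsum_of_inj hR (fun _ => by positivity) hinj)
          (by positivity)

lemma norm_remainderPart_le_div_pow {R : ℤ → 𝕜} {l : ℕ}
    (hR : Summable fun k : ℕ => (k : ℝ) ^ l * ‖R (-(k : ℤ))‖) (hz : ‖z‖ = 1) {K : ℕ} {c t : ℝ}
    (hc : 0 < c) (ht : 0 < t) (hK : c * t ≤ K) :
    ‖remainderPart R K z‖ ≤ (∑' k : ℕ, (k : ℝ) ^ l * ‖R (-(k : ℤ))‖) / c ^ l / t ^ l := by
  have hK0 : 0 < K := by exact_mod_cast (mul_pos hc ht).trans_le hK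
  have hS : 0 ≤ ∑' k : ℕ, (k : ℝ) ^ l * ‖R (-(k : ℤ))‖ := tsum_nonneg fun _ => by positivity
  calc ‖remainderPart R K z‖ ≤ (∑' k : ℕ, (k : ℝ) ^ l * ‖R (-(k : ℤ))‖) / (K : ℝ) ^ l :=
        norm_remainderPart_le hR hz hK0
    _ ≤ (∑' k : ℕ, (k : ℝ) ^ l * ‖R (-(k : ℤ))‖) / (c * t) ^ l := by gcongr
    _ = (∑' k : ℕ, (k : ℝ) ^ l * ‖R (-(k : ℤ))‖) / c ^ l / t ^ l := by rw [mul_pow, div_div]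

end FourierSplitting

lemma Nat.half_le_floor {α : Type*} [Field α] [LinearOrder α] [IsStrictOrderedRing α]
    [FloorSemiring α] {x : α} (hx : 1 ≤ x) : x / 2 ≤ ⌊x⌋₊ := by
  have h1 : (1 : α) ≤ ⌊x⌋₊ := by exact_mod_cast Nat.le_floor (by exact_mod_cast hx)
  linarith [Nat.sub_one_lt_floor x]

lemma zpow_neg_floor_div_neg_log_le_exp {r x : ℝ} (hr0 : 0 < r) (hr1 : r ≤ 1) (hx : 0 ≤ x) :
    r ^ (-(⌊x / -Real.log r⌋₊ : ℤ)) ≤ Real.exp x := by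
  set L := -Real.log r
  have hL : 0 ≤ L := neg_nonneg.mpr (Real.log_nonpos hr0.le hr1)
  have hKL : (⌊x / L⌋₊ : ℝ) * L ≤ x := by
    rcases hL.eq_or_lt with hL0 | hL0
    · simp [← hL0, hx]
    · exact (le_div_iff₀ hL0).mp (Nat.floor_le (div_nonneg hx hL))
  calc r ^ (-(⌊x / L⌋₊ : ℤ)) = Real.exp (⌊x / L⌋₊ * L) := by
        rw [← Real.rpow_intCast, Real.rpow_def_of_pos hr0]
        congr 1
        push_cast
        ring
    _ ≤ Real.exp x := Real.exp_le_exp.mpr hKL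

theorem stmt_14_general (l : ℕ) (R : ℤ → ℂ)
    (hR1 : Summable fun k : ℤ => ‖R k‖)
    (hR2 : Summable fun k : ℕ => (k : ℝ) ^ l * ‖R (-(k : ℤ))‖)
    (ε β₀ β : ℝ) (hε : 0 < ε) (hε1 : ε < 1) (hβ₀ : 0 < β₀)
    (K : ℝ → ℕ) (hK : ∀ t, K t = ⌊β₀ * t / (-Real.log (1 - ε))⌋₊) :
    (∀ t : ℝ, 0 < t → ∀ z : ℂ, 1 - ε ≤ ‖z‖ → ‖z‖ ≤ 1 →
      (Summable fun j : ℕ => ‖R ((j : ℤ) - (K t : ℤ)) * z ^ ((j : ℤ) - (K t : ℤ))‖) ∧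
      ‖∑' j : ℕ, R ((j : ℤ) - (K t : ℤ)) * z ^ ((j : ℤ) - (K t : ℤ))‖ * Real.exp (-(β * t)) ≤
        (∑' k : ℤ, ‖R k‖) * Real.exp (-((β - β₀) * t))) ∧
    (∀ t : ℝ, 0 < t → 1 ≤ K t → ∀ z : ℂ, ‖z‖ = 1 →
      ‖∑' j : ℕ, R (-(K t : ℤ) - 1 - (j : ℤ)) * z ^ (-(K t : ℤ) - 1 - (j : ℤ))‖ ≤
        (∑' k : ℕ, (k : ℝ) ^ l * ‖R (-(k : ℤ))‖) / (K t : ℝ) ^ l) ∧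
    (∃ Cst t₀ : ℝ, ∀ t : ℝ, t₀ ≤ t → ∀ z : ℂ, ‖z‖ = 1 →
      ‖∑' j : ℕ, R (-(K t : ℤ) - 1 - (j : ℤ)) * z ^ (-(K t : ℤ) - 1 - (j : ℤ))‖ ≤
        Cst / t ^ l) := by
  have hr : 0 < 1 - ε := by linarith
  set L := -Real.log (1 - ε)
  have hL : 0 < L := neg_pos.mpr (Real.log_neg hr (by linarith))
  refine ⟨fun t ht z hz1 hz2 => ⟨summable_norm_analyticPart_term hr hz1 hz2 (K t) hR1, ?_⟩,
    fun t _ hKt z hz => norm_remainderPart_le hR2 hz hKt, ?_⟩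
  · have hexp : (1 - ε) ^ (-(K t : ℤ)) ≤ Real.exp (β₀ * t) := by
      rw [hK]
      exact zpow_neg_floor_div_neg_log_le_exp hr (by linarith) (by positivity)
    calc ‖analyticPart R (K t) z‖ * Real.exp (-(β * t))
        ≤ ((∑' k : ℤ, ‖R k‖) * Real.exp (β₀ * t)) * Real.exp (-(β * t)) := by
          gcongr
          exact (norm_analyticPart_le hr hz1 hz2 (K t) hR1).trans (by gcongr)
      _ = (∑' k : ℤ, ‖R k‖) * Real.exp (-((β - β₀) * t)) := by
          rw [mul_assoc, ← Real.exp_add]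
          ring_nf
  · refine ⟨(∑' k : ℕ, (k : ℝ) ^ l * ‖R (-(k : ℤ))‖) / (β₀ / (2 * L)) ^ l, L / β₀,
      fun t ht z hz => norm_remainderPart_le_div_pow hR2 hz (by positivity)
        ((by positivity : 0 < L / β₀).trans_le ht) ?_⟩
    have hx : 1 ≤ β₀ * t / L := by
      rw [le_div_iff₀ hL]
      linarith [(div_le_iff₀' hβ₀).mp ht]
    calc β₀ / (2 * L) * t = β₀ * t / L / 2 := by ring
      _ ≤ K t := hK t ▸ Nat.half_le_floor hx

/-- Analytic approximation of the reflection coefficient: splitting the Fourier series of `R`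
at `k = −K(t)`, `K(t) = ⌊β₀t/(−log(1−ε))⌋`, the analytic part `R_{a,t}(z) = Σ_{k≥−K(t)} R̂(k)z^k`
converges absolutely on `1−ε ≤ |z| ≤ 1` with `|R_{a,t}(z)|e^{−βt} ≤ ‖R̂‖₁ e^{−(β−β₀)t}`, and the
remainder `R_{r,t}(z) = Σ_{k≤−K(t)−1} R̂(k)z^k` satisfies
`|R_{r,t}(z)| ≤ K(t)^{−l} Σ_{k≥1} k^l |R̂(−k)|` on the unit circle; in particular
`R_{r,t} = O(t^{−l})` uniformly on `|z| = 1`. -/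
theorem stmt_14 (l : ℕ) (R : ℤ → ℂ)
    (hR1 : Summable fun k : ℤ => ‖R k‖)
    (hR2 : Summable fun k : ℕ => (k : ℝ) ^ l * ‖R (-(k : ℤ))‖)
    (ε β₀ β : ℝ) (hε : 0 < ε) (hε1 : ε < 1) (hβ₀ : 0 < β₀) (hβ : β₀ < β)
    (K : ℝ → ℕ) (hK : ∀ t, K t = ⌊β₀ * t / (-Real.log (1 - ε))⌋₊) :
    (∀ t : ℝ, 0 < t → ∀ z : ℂ, 1 - ε ≤ ‖z‖ → ‖z‖ ≤ 1 →
      (Summable fun j : ℕ => ‖R ((j : ℤ) - (K t : ℤ)) * z ^ ((j : ℤ) - (K t : ℤ))‖) ∧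
      ‖∑' j : ℕ, R ((j : ℤ) - (K t : ℤ)) * z ^ ((j : ℤ) - (K t : ℤ))‖ * Real.exp (-(β * t)) ≤
        (∑' k : ℤ, ‖R k‖) * Real.exp (-((β - β₀) * t))) ∧
    (∀ t : ℝ, 0 < t → 1 ≤ K t → ∀ z : ℂ, ‖z‖ = 1 →
      ‖∑' j : ℕ, R (-(K t : ℤ) - 1 - (j : ℤ)) * z ^ (-(K t : ℤ) - 1 - (j : ℤ))‖ ≤
        (∑' k : ℕ, (k : ℝ) ^ l * ‖R (-(k : ℤ))‖) / (K t : ℝ) ^ l) ∧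
    (∃ Cst t₀ : ℝ, ∀ t : ℝ, t₀ ≤ t → ∀ z : ℂ, ‖z‖ = 1 →
      ‖∑' j : ℕ, R (-(K t : ℤ) - 1 - (j : ℤ)) * z ^ (-(K t : ℤ) - 1 - (j : ℤ))‖ ≤
        Cst / t ^ l) :=
  stmt_14_general l R hR1 hR2 ε β₀ β hε hε1 hβ₀ K hK
end
end

section
/- Let ρ₀ > 0, C > 0, L > 0, α ∈ (0,1], r ∈ ℂ with |r| ≤ 1. Let Φ be a complex-valued function defined for |z| ≤ ρ₀ with Φ(0) purely imaginary, satisfying |Φ(z) − Φ(0) − i z²/2| ≤ C|z|³ for all |z| ≤ ρ₀ and Re(Φ(z)) ≥ |z|²/4 for z = u e^{−iπ/4} with u ∈ [0, ρ₀]; assume in addition C ρ₀ ≤ 1/8. Let R₁ be a complex-valued function with |R₁(z) − conj(r)| ≤ L|z|^α for z = u e^{−iπ/4}, u ∈ [0, ρ₀]. Then there exists a constant C′ > 0, depending only on C, L, α and ρ₀, such that for all t ≥ 1 and all u ∈ [0, ρ₀ t^{1/2}], setting z = u e^{−iπ/4}: | R₁(z t^{−1/2}) · exp(−t(Φ(z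 t^{−1/2}) − Φ(0))) − conj(r) · exp(−i z²/2) | ≤ C′ t^{−α/2} e^{−u²/8}. -/
/-!
With `ζ = u t^{-1/2} e^{-iπ/4}`, the entry is `R₁(ζ) e^{w₁}` with `w₁ = -t (Φ(ζ) - Φ(0))`, and the
model is `conj(r) e^{w₂}` with `w₂ = -u²/2`, because `e^{-iπ/4}² = -i`. The lower bound on `Re Φ`
along the ray gives `Re w₁ ≤ -u²/4`, so the mean value theorem for `exp` on the half-plane
`Re w ≤ -u²/4` bounds the difference by
`(|R₁(ζ) - conj r| + |w₁ - w₂|) e^{-u²/4} ≤ (L u^α t^{-α/2} + C u³ t^{-1/2}) e^{-u²/4}`.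
Half of the Gaussian absorbs `u^α, u³ ≤ 1 + u⁴`.
-/

open scoped Real

local notation "ω" => Complex.exp (-((π : ℂ) / 4) * Complex.I)

namespace Complex

theorem norm_exp_sub_exp_le_of_re_le {w₁ w₂ : ℂ} {B : ℝ} (h₁ : w₁.re ≤ B)
    (h₂ : w₂.re ≤ B) : ‖exp w₁ - exp w₂‖ ≤ Real.exp B * ‖w₁ - w₂‖ :=
  (convex_halfSpace_re_le B).norm_image_sub_le_of_norm_deriv_le
    (fun _ _ => differentiableAt_exp)
    (fun w hw => by rw [deriv_exp, norm_exp]; exact Real.exp_le_exp.2 hw) h₂ h₁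

theorem norm_mul_exp_sub_mul_exp_le {a b w₁ w₂ : ℂ} {B ε δ : ℝ} (hb : ‖b‖ ≤ 1)
    (hab : ‖a - b‖ ≤ ε) (hw : ‖w₁ - w₂‖ ≤ δ) (h₁ : w₁.re ≤ B) (h₂ : w₂.re ≤ B) :
    ‖a * exp w₁ - b * exp w₂‖ ≤ (ε + δ) * Real.exp B := by
  have hexp : ‖exp w₁‖ ≤ Real.exp B := by rw [norm_exp]; exact Real.exp_le_exp.2 h₁
  calc ‖a * exp w₁ - b * exp w₂‖ = ‖(a - b) * exp w₁ + b * (exp w₁ - exp w₂)‖ := by ring_nf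
    _ ≤ ‖a - b‖ * ‖exp w₁‖ + ‖b‖ * ‖exp w₁ - exp w₂‖ := by
      grw [norm_add_le, norm_mul, norm_mul]
    _ ≤ ε * Real.exp B + 1 * (Real.exp B * δ) := by
      gcongr
      · exact (norm_nonneg _).trans hab
      · exact (norm_exp_sub_exp_le_of_re_le h₁ h₂).trans (by gcongr)
    _ = (ε + δ) * Real.exp B := by ring

theorem exp_neg_pi_div_four_mul_I_sq : ω ^ 2 = -I := by
  rw [← exp_nat_mul, ← exp_neg_pi_div_two_mul_I]
  ring_nf

theorem I_mul_mul_exp_neg_pi_div_four_mul_I_sq (x : ℂ) : I * (x * ω) ^ 2 = x ^ 2 := by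
  rw [mul_pow, exp_neg_pi_div_four_mul_I_sq]
  linear_combination (-x ^ 2) * I_sq

theorem norm_ofReal_mul_exp_neg_pi_div_four_mul_I (x : ℝ) : ‖(x : ℂ) * ω‖ = |x| := by
  rw [norm_mul, norm_exp]
  simp

end Complex

namespace Real

theorem one_add_pow_four_mul_exp_neg_sq_div_eight_le (u : ℝ) :
    (1 + u ^ 4) * exp (-(u ^ 2) / 8) ≤ 128 := by
  have h := quadratic_le_exp_of_nonneg (x := u ^ 2 / 8) (by positivity)
  rw [neg_div, exp_neg, ← div_eq_mul_inv, div_le_iff₀ (exp_pos _)]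
  nlinarith [sq_nonneg u]

theorem rpow_le_one_add_pow_four {u α : ℝ} (hu : 0 ≤ u) (hα₀ : 0 ≤ α) (hα₁ : α ≤ 1) :
    u ^ α ≤ 1 + u ^ 4 := by
  rcases le_or_gt u 1 with h | h
  · linarith [rpow_le_one hu h hα₀, pow_nonneg hu 4]
  · calc u ^ α ≤ u ^ (1 : ℝ) := rpow_le_rpow_of_exponent_le h.le hα₁
      _ ≤ 1 + u ^ 4 := by rw [rpow_one]; linarith [le_self_pow₀ h.le (n := 4) (by norm_num)]

theorem pow_three_le_one_add_pow_four (u : ℝ) : u ^ 3 ≤ 1 + u ^ 4 := by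
  nlinarith [sq_nonneg (u ^ 2 - 1), sq_nonneg (u - 1), sq_nonneg u, sq_nonneg (u ^ 2 - u)]

theorem div_sqrt_rpow {u t : ℝ} (hu : 0 ≤ u) (ht : 0 ≤ t) (α : ℝ) :
    (u / √t) ^ α = u ^ α * t ^ (-(α / 2)) := by
  rw [div_rpow hu (sqrt_nonneg t), sqrt_eq_rpow, ← rpow_mul ht,
    rpow_neg ht, div_eq_mul_inv, one_div_mul_eq_div]

theorem mul_div_sqrt_sq {t : ℝ} (ht : 0 < t) (u : ℝ) : t * (u / √t) ^ 2 = u ^ 2 := by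
  rw [div_pow, sq_sqrt ht.le]; field_simp

theorem mul_div_sqrt_pow_three_le {u t α : ℝ} (hu : 0 ≤ u) (ht : 1 ≤ t) (hα : α ≤ 1) :
    t * (u / √t) ^ 3 ≤ u ^ 3 * t ^ (-(α / 2)) := by
  have ht₀ : 0 < t := zero_lt_one.trans_le ht
  calc t * (u / √t) ^ 3 = u ^ 3 * t ^ (-(1 / 2 : ℝ)) := by
        rw [pow_succ, ← mul_assoc, mul_div_sqrt_sq ht₀, rpow_neg ht₀.le,
          ← sqrt_eq_rpow]
        ring
    _ ≤ u ^ 3 * t ^ (-(α / 2)) := by gcongr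

theorem rescaled_weight_le {u t α L C : ℝ} (hu : 0 ≤ u) (ht : 1 ≤ t) (hα₀ : 0 ≤ α)
    (hα₁ : α ≤ 1) (hL : 0 ≤ L) (hC : 0 ≤ C) :
    (L * (u / √t) ^ α + t * (C * (u / √t) ^ 3)) * exp (-(t * (u / √t) ^ 2) / 4) ≤
      128 * (L + C) * t ^ (-(α / 2)) * exp (-(u ^ 2) / 8) := by
  have ht₀ : 0 < t := zero_lt_one.trans_le ht
  set τ := t ^ (-(α / 2))
  set E := exp (-(u ^ 2) / 8)
  have hτ : 0 ≤ τ := rpow_nonneg ht₀.le _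
  have hE : exp (-(t * (u / √t) ^ 2) / 4) = E * E := by
    rw [mul_div_sqrt_sq ht₀, ← exp_add]; ring_nf
  have hsum : L * (u / √t) ^ α + t * (C * (u / √t) ^ 3) ≤ (L + C) * τ * (1 + u ^ 4) := by
    rw [div_sqrt_rpow hu ht₀.le, mul_left_comm t]
    have h3 := mul_div_sqrt_pow_three_le hu ht hα₁
    have ha := rpow_le_one_add_pow_four hu hα₀ hα₁
    have hc := pow_three_le_one_add_pow_four u
    calc L * (u ^ α * τ) + C * (t * (u / √t) ^ 3)
        ≤ L * ((1 + u ^ 4) * τ) + C * (u ^ 3 * τ) := by gcongr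
      _ ≤ L * ((1 + u ^ 4) * τ) + C * ((1 + u ^ 4) * τ) := by gcongr
      _ = (L + C) * τ * (1 + u ^ 4) := by ring
  calc (L * (u / √t) ^ α + t * (C * (u / √t) ^ 3)) * exp (-(t * (u / √t) ^ 2) / 4)
      ≤ (L + C) * τ * (1 + u ^ 4) * (E * E) := by rw [hE]; gcongr
    _ = (L + C) * τ * ((1 + u ^ 4) * E) * E := by ring
    _ ≤ (L + C) * τ * 128 * E := by
        gcongr; exact one_add_pow_four_mul_exp_neg_sq_div_eight_le u
    _ = 128 * (L + C) * τ * E := by ring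

end Real

section Phase

variable {Φ : ℂ → ℂ} {C s t : ℝ}

theorem re_neg_mul_phase_sub_le (hΦ0 : (Φ 0).re = 0) (hΦ1 : s ^ 2 / 4 ≤ (Φ (s * ω)).re)
    (ht : 0 ≤ t) : (-(t : ℂ) * (Φ (s * ω) - Φ 0)).re ≤ -(t * s ^ 2) / 4 := by
  rw [← Complex.ofReal_neg, Complex.re_ofReal_mul, Complex.sub_re, hΦ0, sub_zero]
  nlinarith

theorem norm_neg_mul_phase_sub_model_le
    (hΦ2 : ‖Φ (s * ω) - Φ 0 - Complex.I * (s * ω) ^ 2 / 2‖ ≤ C * ‖(s : ℂ) * ω‖ ^ 3)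
    (hs : 0 ≤ s) (ht : 0 ≤ t) :
    ‖-(t : ℂ) * (Φ (s * ω) - Φ 0) - -((t * s ^ 2 / 2 : ℝ) : ℂ)‖ ≤ t * (C * s ^ 3) := by
  calc ‖-(t : ℂ) * (Φ (s * ω) - Φ 0) - -((t * s ^ 2 / 2 : ℝ) : ℂ)‖
      = ‖(t : ℂ) * (Φ (s * ω) - Φ 0 - Complex.I * (s * ω) ^ 2 / 2)‖ := by
        rw [Complex.I_mul_mul_exp_neg_pi_div_four_mul_I_sq, ← norm_neg]
        push_cast
        ring_nf
    _ = t * ‖Φ (s * ω) - Φ 0 - Complex.I * (s * ω) ^ 2 / 2‖ := by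
        rw [norm_mul, Complex.norm_real, Real.norm_of_nonneg ht]
    _ ≤ t * (C * s ^ 3) := by
        grw [hΦ2, Complex.norm_ofReal_mul_exp_neg_pi_div_four_mul_I, abs_of_nonneg hs]

end Phase

theorem stmt_16_general (ρ₀ C L α : ℝ) (r : ℂ)
    (hC : 0 < C) (hL : 0 < L) (hα : 0 < α) (hα1 : α ≤ 1)
    (hr : norm r ≤ 1)
    (Φ : ℂ → ℂ) (hΦ0 : (Φ 0).re = 0)
    (hΦ2 : ∀ z : ℂ, norm z ≤ ρ₀ →
      norm (Φ z - Φ 0 - Complex.I * z ^ 2 / 2) ≤ C * norm z ^ 3)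
    (hΦ1 : ∀ u : ℝ, 0 ≤ u → u ≤ ρ₀ →
      u ^ 2 / 4 ≤ (Φ ((u : ℂ) * Complex.exp (-((π : ℂ) / 4) * Complex.I))).re)
    (R₁ : ℂ → ℂ)
    (hR₁ : ∀ u : ℝ, 0 ≤ u → u ≤ ρ₀ →
      norm (R₁ ((u : ℂ) * Complex.exp (-((π : ℂ) / 4) * Complex.I)) -
        (starRingEnd ℂ) r) ≤ L * u ^ α) :
    ∃ C' : ℝ, 0 < C' ∧ ∀ t : ℝ, 1 ≤ t → ∀ u : ℝ, 0 ≤ u → u ≤ ρ₀ * Real.sqrt t →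
      norm
          (R₁ (((u / Real.sqrt t : ℝ) : ℂ) * Complex.exp (-((π : ℂ) / 4) * Complex.I)) *
              Complex.exp (-(t : ℂ) *
                (Φ (((u / Real.sqrt t : ℝ) : ℂ) * Complex.exp (-((π : ℂ) / 4) * Complex.I)) -
                  Φ 0)) -
            (starRingEnd ℂ) r *
              Complex.exp (-(Complex.I *
                ((u : ℂ) * Complex.exp (-((π : ℂ) / 4) * Complex.I)) ^ 2 / 2))) ≤
        C' * t ^ (-(α / 2)) * Real.exp (-(u ^ 2) / 8) := by
  refine ⟨128 * (L + C), by positivity, fun t ht u hu hut => ?_⟩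
  have ht₀ : 0 < t := zero_lt_one.trans_le ht
  set s := u / √t
  have hs : 0 ≤ s := by positivity
  have hsρ : s ≤ ρ₀ := (div_le_iff₀ (Real.sqrt_pos.2 ht₀)).2 hut
  have hsΦ : ‖(s : ℂ) * ω‖ ≤ ρ₀ := by
    rwa [Complex.norm_ofReal_mul_exp_neg_pi_div_four_mul_I, abs_of_nonneg hs]
  have hmodel : -(Complex.I * ((u : ℂ) * ω) ^ 2 / 2) = -((t * s ^ 2 / 2 : ℝ) : ℂ) := by
    rw [Complex.I_mul_mul_exp_neg_pi_div_four_mul_I_sq, Real.mul_div_sqrt_sq ht₀]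
    push_cast; ring
  rw [hmodel]
  refine (Complex.norm_mul_exp_sub_mul_exp_le (by simpa using hr) (hR₁ s hs hsρ)
    (norm_neg_mul_phase_sub_model_le (hΦ2 _ hsΦ) hs ht₀.le)
    (re_neg_mul_phase_sub_le hΦ0 (hΦ1 s hs hsρ) ht₀.le) ?_).trans ?_
  · rw [← Complex.ofReal_neg, Complex.ofReal_re]
    linarith [mul_nonneg ht₀.le (sq_nonneg s)]
  · exact Real.rescaled_weight_le hu ht hα.le hα1 hL.le hC.le

/-- Estimate comparing, on the ray `Σ₁ = {u e^{−iπ/4} : u ≥ 0}` of the rescaled small cross,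
the jump entry `R₁(z t^{−1/2}) e^{−t(Φ(z t^{−1/2})−Φ(0))}` with the model entry
`conj(r) e^{−iz²/2}`: the difference is `O(t^{−α/2} e^{−u²/8})`. -/
theorem stmt_16 (ρ₀ C L α : ℝ) (r : ℂ)
    (hρ₀ : 0 < ρ₀) (hC : 0 < C) (hL : 0 < L) (hα : 0 < α) (hα1 : α ≤ 1)
    (hr : norm r ≤ 1)
    (Φ : ℂ → ℂ) (hΦ0 : (Φ 0).re = 0)
    (hΦ2 : ∀ z : ℂ, norm z ≤ ρ₀ →
      norm (Φ z - Φ 0 - Complex.I * z ^ 2 / 2) ≤ C * norm z ^ 3)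
    (hΦ1 : ∀ u : ℝ, 0 ≤ u → u ≤ ρ₀ →
      u ^ 2 / 4 ≤ (Φ ((u : ℂ) * Complex.exp (-((π : ℂ) / 4) * Complex.I))).re)
    (hCρ : C * ρ₀ ≤ 1 / 8)
    (R₁ : ℂ → ℂ)
    (hR₁ : ∀ u : ℝ, 0 ≤ u → u ≤ ρ₀ →
      norm (R₁ ((u : ℂ) * Complex.exp (-((π : ℂ) / 4) * Complex.I)) -
        (starRingEnd ℂ) r) ≤ L * u ^ α) :
    ∃ C' : ℝ, 0 < C' ∧ ∀ t : ℝ, 1 ≤ t → ∀ u : ℝ, 0 ≤ u → u ≤ ρ₀ * Real.sqrt t →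
      norm
          (R₁ (((u / Real.sqrt t : ℝ) : ℂ) * Complex.exp (-((π : ℂ) / 4) * Complex.I)) *
              Complex.exp (-(t : ℂ) *
                (Φ (((u / Real.sqrt t : ℝ) : ℂ) * Complex.exp (-((π : ℂ) / 4) * Complex.I)) -
                  Φ 0)) -
            (starRingEnd ℂ) r *
              Complex.exp (-(Complex.I *
                ((u : ℂ) * Complex.exp (-((π : ℂ) / 4) * Complex.I)) ^ 2 / 2))) ≤
        C' * t ^ (-(α / 2)) * Real.exp (-(u ^ 2) / 8) :=
  stmt_16_general ρ₀ C L α r hC hL hα hα1 hr Φ hΦ0 hΦ2 hΦ1 R₁ hR₁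
end
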